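/- arXiv:2308.06044 — 4 statements merged into one kernel-verified Lean document; each statement's English description precedes it below -/
import Mathlib

section
/- For every q ≥ 1, the class TD_q of graphs of treedepth at most q is homomorphism distinguishing closed, i.e. cl(TD_q) = TD_q. -/
set_option maxHeartbeats 1000000

/-! ## Bundled finite simple graphs and homomorphism counting -/

/-- A bundled finite simple graph (vertex set `Fin n`). -/
abbrev GraphB : Type := Σ n : ℕ, SimpleGraph (Fin n)

/-- The number of graph homomorphisms from `F` to `G`. -/
noncomputable def homCount {V W : Type*} (F : SimpleGraph V) (G : SimpleGraph W) : ℕ :=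
  Set.ncard {f : V → W | ∀ ⦃u v⦄, F.Adj u v → G.Adj (f u) (f v)}

/-- `G` and `H` are homomorphism indistinguishable over the class `𝓕`. -/
def HomIndist (𝓕 : Set GraphB) {V W : Type*} (G : SimpleGraph V) (H : SimpleGraph W) : Prop :=
  ∀ A ∈ 𝓕, homCount A.2 G = homCount A.2 H

/-- The homomorphism distinguishing closure of the class `𝓕`. -/
def hdCl (𝓕 : Set GraphB) : Set GraphB :=
  {A | ∀ G H : GraphB, HomIndist 𝓕 G.2 H.2 → homCount A.2 G.2 = homCount A.2 H.2}

/-! ## Pebble forest covers and the class `T^k_q` -/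

/-- A `k`-pebble forest cover of depth at most `q`.  The rooted forest is encoded by its
ancestor (partial) order `le`, in which the set of ancestors of any vertex is a chain. -/
structure PebbleForestCover {V : Type*} (G : SimpleGraph V) (k q : ℕ) where
  le : V → V → Prop
  le_refl : ∀ v, le v v
  le_antisymm : ∀ u v, le u v → le v u → u = v
  le_trans : ∀ u v w, le u v → le v w → le u w
  downChain : ∀ u v w, le u w → le v w → le u v ∨ le v u
  peb : V → Fin k
  cover : ∀ ⦃u v⦄, G.Adj u v → le u v ∨ le v u
  pebbleCond : ∀ ⦃u v w⦄, G.Adj u v → le u v → le u w → le w v → u ≠ w → peb u ≠ peb w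
  heightLE : ∀ v, Set.ncard {u | le u v} ≤ q

def HasPFC {V : Type*} (G : SimpleGraph V) (k q : ℕ) : Prop :=
  Nonempty (PebbleForestCover G k q)

/-- The class `T^k_q` of graphs admitting a `k`-pebble forest cover of depth at most `q`. -/
def Tclass (k q : ℕ) : Set GraphB := {G | HasPFC G.2 k q}

/-! ## Forest covers, treedepth, tree decompositions, treewidth -/

/-- `G` has a forest cover of height at most `q`, i.e. treedepth at most `q`. -/
def HasForestCover {V : Type*} (G : SimpleGraph V) (q : ℕ) : Prop :=
  ∃ le : V → V → Prop,
    (∀ v, le v v) ∧ (∀ u v, le u v → le v u → u = v) ∧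
    (∀ u v w, le u v → le v w → le u w) ∧
    (∀ u v w, le u w → le v w → le u v ∨ le v u) ∧
    (∀ ⦃u v⦄, G.Adj u v → le u v ∨ le v u) ∧
    (∀ v, Set.ncard {u | le u v} ≤ q)

/-- The class `TD_q` of graphs of treedepth at most `q`. -/
def TDclass (q : ℕ) : Set GraphB := {G | HasForestCover G.2 q}

/-- A tree decomposition of `G`. -/
structure TreeDecomp {V : Type*} (G : SimpleGraph V) where
  n : ℕ
  T : SimpleGraph (Fin n)
  isTree : T.IsTree
  bag : Fin n → Set V
  coversVerts : ∀ v : V, ∃ t, v ∈ bag t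
  coversEdges : ∀ ⦃u v⦄, G.Adj u v → ∃ t, u ∈ bag t ∧ v ∈ bag t
  bagsConnected : ∀ v : V, (SimpleGraph.induce {t | v ∈ bag t} T).Connected

/-- The decomposition has width at most `w`. -/
def TreeDecomp.widthLE {V : Type*} {G : SimpleGraph V} (d : TreeDecomp G) (w : ℕ) : Prop :=
  ∀ t, (d.bag t).ncard ≤ w + 1

/-- `t` lies on the (unique) path from `r` to `s` in the tree `d.T`,
i.e. `t` is an ancestor of `s` when `d.T` is rooted at `r`. -/
def TreeDecomp.anc {V : Type*} {G : SimpleGraph V} (d : TreeDecomp G) (r t s : Fin d.n) : Prop :=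
  ∀ w : d.T.Walk r s, t ∈ w.support

/-- The decomposition has depth at most `q`: for some root `r`, for every node `s`,
the union of the bags of ancestors of `s` has at most `q` vertices. -/
def TreeDecomp.depthLE {V : Type*} {G : SimpleGraph V} (d : TreeDecomp G) (q : ℕ) : Prop :=
  ∃ r : Fin d.n, ∀ s : Fin d.n, (⋃ t ∈ {t | d.anc r t s}, d.bag t).ncard ≤ q

/-- The class `TW_w` of graphs of treewidth at most `w`. -/
def TWclass (w : ℕ) : Set GraphB := {G | ∃ d : TreeDecomp G.2, d.widthLE w}

/-! ## Minors and disjoint unions -/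

/-- `H` is a minor of `G`: there are pairwise disjoint connected nonempty branch sets in `G`,
one for each vertex of `H`, such that edges of `H` are realised between branch sets. -/
def IsMinor {W V : Type*} (H : SimpleGraph W) (G : SimpleGraph V) : Prop :=
  ∃ φ : V → Option W,
    (∀ w : W, (SimpleGraph.induce {v | φ v = some w} G).Connected) ∧
    (∀ ⦃w₁ w₂⦄, H.Adj w₁ w₂ → ∃ v₁ v₂, φ v₁ = some w₁ ∧ φ v₂ = some w₂ ∧ G.Adj v₁ v₂)

/-- The disjoint union of two simple graphs. -/
def sumGraph {V W : Type*} (G : SimpleGraph V) (H : SimpleGraph W) : SimpleGraph (V ⊕ W) where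
  Adj x y :=
    match x, y with
    | Sum.inl a, Sum.inl b => G.Adj a b
    | Sum.inr a, Sum.inr b => H.Adj a b
    | _, _ => False
  symm := by
    constructor
    rintro (a | a) (b | b) h
    · exact G.adj_symm h
    · exact h.elim
    · exact h.elim
    · exact H.adj_symm h
  loopless := by
    constructor
    rintro (a | a) h
    · exact G.irrefl h
    · exact H.irrefl h

/-! ## Cops-and-robber games -/

/-- A robber move from `v` to `u`: a walk in `G` none of whose vertices lies in `A`
(`A` will be `X ∩ Y` for old/new cop positions `X`, `Y` on `G` plus a `k`-clique). -/
def RobberMove {V : Type*} {k : ℕ} (G : SimpleGraph V) (A : Finset (V ⊕ Fin k)) (v u : V) :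
    Prop :=
  ∃ w : G.Walk v u, ∀ x ∈ w.support, Sum.inl x ∉ A

/-- The initial cop position: all `k` cops on the auxiliary clique. -/
def initPos (V : Type*) [DecidableEq V] (k : ℕ) : Finset (V ⊕ Fin k) :=
  Finset.univ.image Sum.inr

/-- In the (non-monotone) cops-and-robber game on `G` with `k` cops, from cop position `X`
and robber position `v`, Cops can catch the robber within `q` further rounds. -/
def CopsCatch {V : Type*} [DecidableEq V] (G : SimpleGraph V) (k : ℕ) :
    ℕ → Finset (V ⊕ Fin k) → V → Prop
  | 0, _, _ => False
  | q + 1, X, v =>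
      ∃ Y : Finset (V ⊕ Fin k), Y.card = k ∧ (X ∩ Y).card = k - 1 ∧
        ∀ u : V, RobberMove G (X ∩ Y) v u → (Sum.inl u ∈ Y ∨ CopsCatch G k q Y u)

/-- Monotone variant: Cops may only move so that the robber escape space does not grow. -/
def MonCopsCatch {V : Type*} [DecidableEq V] (G : SimpleGraph V) (k : ℕ) :
    ℕ → Finset (V ⊕ Fin k) → V → Prop
  | 0, _, _ => False
  | q + 1, X, v =>
      ∃ Y : Finset (V ⊕ Fin k), Y.card = k ∧ (X ∩ Y).card = k - 1 ∧
        (∀ u : V, RobberMove G (X ∩ Y) v u → RobberMove G X v u) ∧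
        ∀ u : V, RobberMove G (X ∩ Y) v u → (Sum.inl u ∈ Y ∨ MonCopsCatch G k q Y u)

/-- Robber can evade capture for `q` further rounds from cop position `X`, robber at `v`. -/
def RobberEsc {V : Type*} [DecidableEq V] (G : SimpleGraph V) (k : ℕ) :
    ℕ → Finset (V ⊕ Fin k) → V → Prop
  | 0, _, _ => True
  | q + 1, X, v =>
      ∀ Y : Finset (V ⊕ Fin k), Y.card = k → (X ∩ Y).card = k - 1 →
        ∃ u : V, RobberMove G (X ∩ Y) v u ∧ Sum.inl u ∉ Y ∧ RobberEsc G k q Y u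

/-- Cops has a winning strategy in the `q`-round `k`-cops-and-robber game on `G`. -/
def CopsWinGame {V : Type*} [DecidableEq V] (G : SimpleGraph V) (k q : ℕ) : Prop :=
  ∀ v : V, CopsCatch G k q (initPos V k) v

/-- Cops has a winning strategy in the monotone `q`-round `k`-cops-and-robber game on `G`. -/
def MonCopsWinGame {V : Type*} [DecidableEq V] (G : SimpleGraph V) (k q : ℕ) : Prop :=
  ∀ v : V, MonCopsCatch G k q (initPos V k) v

/-- Robber has a winning strategy in the `q`-round `k`-cops-and-robber game on `G`. -/
def RobberWinsGame {V : Type*} [DecidableEq V] (G : SimpleGraph V) (k q : ℕ) : Prop :=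
  ∃ v : V, RobberEsc G k q (initPos V k) v

/-- The `h × ℓ` grid graph. -/
def gridGraph (h l : ℕ) : SimpleGraph (Fin h × Fin l) :=
  (SimpleGraph.pathGraph h).boxProd (SimpleGraph.pathGraph l)

/-! ## The CFI-like construction `G_U` -/

/-- Vertices of `G_U`: pairs `(v, S)` with `S` a set of edges incident to `v` whose
parity matches `|{v} ∩ U|`. -/
def CFIvert {V : Type*} (G : SimpleGraph V) (U : Set V) : Type _ :=
  {p : V × Set (Sym2 V) // p.2 ⊆ G.incidenceSet p.1 ∧ (Even p.2.ncard ↔ p.1 ∉ U)}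

/-- The CFI-like graph `G_U` of Roberson. -/
def CFI {V : Type*} (G : SimpleGraph V) (U : Set V) : SimpleGraph (CFIvert G U) where
  Adj x y := G.Adj x.1.1 y.1.1 ∧ s(x.1.1, y.1.1) ∉ symmDiff x.1.2 y.1.2
  symm := by
    constructor
    rintro x y ⟨h1, h2⟩
    refine ⟨h1.symm, ?_⟩
    rw [Sym2.eq_swap, symmDiff_comm]
    exact h2
  loopless := by
    constructor
    rintro x ⟨h1, _⟩
    exact G.irrefl h1

/-! ## Counting first-order logic -/

/-- Formulae of first-order counting logic `C` with variables indexed by `α`. -/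
inductive CForm (α : Type) : Type
  | eq : α → α → CForm α
  | adj : α → α → CForm α
  | not : CForm α → CForm α
  | or : CForm α → CForm α → CForm α
  | and : CForm α → CForm α → CForm α
  | count : ℕ → α → CForm α → CForm α

namespace CForm

variable {α : Type} [DecidableEq α]

/-- Quantifier rank. -/
def qr : CForm α → ℕ
  | eq _ _ => 0
  | adj _ _ => 0
  | not φ => qr φ
  | or φ ψ => max (qr φ) (qr ψ)
  | and φ ψ => max (qr φ) (qr ψ)
  | count _ _ φ => qr φ + 1

/-- Free variables. -/
def freeVars : CForm α → Finset α
  | eq i j => {i, j}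
  | adj i j => {i, j}
  | not φ => freeVars φ
  | or φ ψ => freeVars φ ∪ freeVars ψ
  | and φ ψ => freeVars φ ∪ freeVars ψ
  | count _ i φ => (freeVars φ).erase i

/-- Satisfaction in a simple graph, relative to a partial variable assignment. -/
def Sat {V : Type*} (G : SimpleGraph V) : CForm α → (α → Option V) → Prop
  | eq i j, a => ∃ v, a i = some v ∧ a j = some v
  | adj i j, a => ∃ v w, a i = some v ∧ a j = some w ∧ G.Adj v w
  | not φ, a => ¬ Sat G φ a
  | or φ ψ, a => Sat G φ a ∨ Sat G ψ a
  | and φ ψ, a => Sat G φ a ∧ Sat G ψ a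
  | count t i φ, a =>
      ∃ s : Finset V, t ≤ s.card ∧ ∀ v ∈ s, Sat G φ (fun j => if j = i then some v else a j)

/-- Guarded formulae: every quantifier occurs as `∃^{≥t} y (E x y ∧ ψ)` with `x ≠ y`. -/
def Guarded : CForm α → Prop
  | count _ y (and (adj x y') χ) => y' = y ∧ x ≠ y ∧ Guarded χ
  | count _ _ _ => False
  | eq _ _ => True
  | adj _ _ => True
  | not φ => Guarded φ
  | or φ ψ => Guarded φ ∧ Guarded ψ
  | and φ ψ => Guarded φ ∧ Guarded ψ

end CForm

/-! ## Labelled graphs, products, construction trees -/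

/-- A `k`-labelled finite graph. -/
structure LGraph (k : ℕ) : Type 1 where
  V : Type
  fin : Finite V
  G : SimpleGraph V
  ν : Fin k → Option V

namespace LGraph

variable {k : ℕ}

/-- Number of homomorphisms between `k`-labelled graphs. -/
noncomputable def lhomCount (F G : LGraph k) : ℕ :=
  Set.ncard {f : F.V → G.V |
    (∀ ⦃u v⦄, F.G.Adj u v → G.G.Adj (f u) (f v)) ∧
    ∀ i v, F.ν i = some v → ∃ w, G.ν i = some w ∧ f v = w}

/-- Remove label `i`. -/
def removeLabel (A : LGraph k) (i : Fin k) : LGraph k :=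
  { A with ν := fun j => if j = i then none else A.ν j }

/-- Every vertex carries at least one label. -/
def FullyLabelled (A : LGraph k) : Prop := ∀ v : A.V, ∃ i, A.ν i = some v

/-- Adjacency on the disjoint sum of two labelled graphs. -/
def sumAdj (A B : LGraph k) : A.V ⊕ B.V → A.V ⊕ B.V → Prop
  | Sum.inl u, Sum.inl v => A.G.Adj u v
  | Sum.inr u, Sum.inr v => B.G.Adj u v
  | _, _ => False

lemma sumAdj_symm (A B : LGraph k) : ∀ x y, sumAdj A B x y → sumAdj A B y x := by
  rintro (u | u) (v | v) h
  · exact A.G.adj_symm h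
  · exact h.elim
  · exact h.elim
  · exact B.G.adj_symm h

/-- The gluing relation: vertices carrying the same label get identified. -/
def glue (A B : LGraph k) : A.V ⊕ B.V → A.V ⊕ B.V → Prop := fun x y =>
  ∃ i : Fin k, (A.ν i).map Sum.inl = some x ∧ (B.ν i).map Sum.inr = some y

/-- The product of two `k`-labelled graphs: disjoint union, identify equally labelled
vertices, suppress loops and parallel edges. -/
def product (A B : LGraph k) : LGraph k where
  V := Quot (glue A B)
  fin := by
    haveI := A.fin
    haveI := B.fin
    exact Finite.of_surjective (Quot.mk _) (fun x => Quot.inductionOn x fun a => ⟨a, rfl⟩)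
  G :=
    { Adj := fun x y =>
        x ≠ y ∧ ∃ u v, Quot.mk _ u = x ∧ Quot.mk _ v = y ∧ sumAdj A B u v
      symm := by
        constructor
        rintro x y ⟨hne, u, v, hu, hv, h⟩
        exact ⟨hne.symm, v, u, hv, hu, sumAdj_symm A B u v h⟩
      loopless := ⟨fun x h => h.1 rfl⟩ }
  ν := fun i =>
    ((A.ν i).map fun v => Quot.mk _ (Sum.inl v)).orElse
      fun _ => (B.ν i).map fun v => Quot.mk _ (Sum.inr v)

/-- Isomorphism of labelled graphs. -/
def LIso (A B : LGraph k) : Prop :=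
  ∃ e : A.G ≃g B.G, ∀ i, (A.ν i).map (fun v => e v) = B.ν i

end LGraph

/-- `k`-construction trees: leaves carry (fully labelled) graphs, unary nodes remove
one label, binary nodes take products. -/
inductive CT (k : ℕ) : Type 1
  | leaf : LGraph k → CT k
  | elim : Fin k → CT k → CT k
  | prod : CT k → CT k → CT k

namespace CT

variable {k : ℕ}

/-- The labelled graph constructed by a construction tree. -/
def graphOf : CT k → LGraph k
  | leaf A => A
  | elim i t => (graphOf t).removeLabel i
  | prod t₁ t₂ => (graphOf t₁).product (graphOf t₂)

/-- Validity: leaves are fully labelled and elimination nodes remove an assigned label. -/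
def Valid : CT k → Prop
  | leaf A => A.FullyLabelled
  | elim i t => Valid t ∧ (graphOf t).ν i ≠ none
  | prod t₁ t₂ => Valid t₁ ∧ Valid t₂

/-- Guarded validity: labels may only be removed from vertices with a labelled neighbour. -/
def GuardedValid : CT k → Prop
  | leaf A => A.FullyLabelled
  | elim i t => GuardedValid t ∧
      ∃ v, (graphOf t).ν i = some v ∧
        ∃ j w, (graphOf t).ν j = some w ∧ (graphOf t).G.Adj v w
  | prod t₁ t₂ => GuardedValid t₁ ∧ GuardedValid t₂

/-- The elimination depth: maximal number of elimination nodes on a root-to-leaf path. -/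
def elimDepth : CT k → ℕ
  | leaf _ => 0
  | elim _ t => elimDepth t + 1
  | prod t₁ t₂ => max (elimDepth t₁) (elimDepth t₂)

end CT

/-- The class `L^k_q` of `k`-labelled graphs admitting a `k`-construction tree of
elimination depth at most `q`. -/
def Lclass (k q : ℕ) : Set (LGraph k) :=
  {F | ∃ t : CT k, CT.Valid t ∧ CT.elimDepth t ≤ q ∧ LGraph.LIso (CT.graphOf t) F}

/-- The class `GL^k_q`: as `L^k_q`, but labels may only be removed from vertices with a
labelled neighbour. -/
def GLclass (k q : ℕ) : Set (LGraph k) :=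
  {F | ∃ t : CT k, CT.GuardedValid t ∧ CT.elimDepth t ≤ q ∧ LGraph.LIso (CT.graphOf t) F}

/-- The class `GE^k_q` of unlabelled graphs underlying graphs in `GL^k_q`. -/
def GEclass (k q : ℕ) : Set GraphB :=
  {G | ∃ F ∈ GLclass k q, Nonempty (F.G ≃g G.2)}

/-! ## The bijective pebble game -/

/-- `γ` is a partial isomorphism between `G` and `H`. -/
def PartialIso {V W : Type*} (G : SimpleGraph V) (H : SimpleGraph W) {k : ℕ}
    (γ : Fin k → Option (V × W)) : Prop :=
  ∀ i j vi wi vj wj, γ i = some (vi, wi) → γ j = some (vj, wj) →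
    ((vi = vj ↔ wi = wj) ∧ (G.Adj vi vj ↔ H.Adj wi wj))

/-- Duplicator wins the `q`-round bijective `k`-pebble game on `G` and `H` from position `γ`. -/
def DupWins {V W : Type*} (G : SimpleGraph V) (H : SimpleGraph W) (k : ℕ) :
    ℕ → (Fin k → Option (V × W)) → Prop
  | 0, γ => PartialIso G H γ
  | q + 1, γ => PartialIso G H γ ∧
      ∀ p : Fin k, ∃ f : V ≃ W, ∀ v : V,
        DupWins G H k q (fun j => if j = p then some (v, f v) else γ j)


/-!
If `A` has treedepth `> q`, some vertex `u₀` lies in a component of treedepth `> q`, and the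
CFI-like graphs `A_∅` and `A_{u₀}` separate `A` from `TD_q`. A homomorphism `T → A_U` is a
homomorphism `φ : T → A` together with a lift of `φ`, and the lifts for `U` are a coset of the lifts
for `∅` under symmetric difference; hence `hom(T, A_{u₀}) ≤ hom(T, A_∅)`, with equality as soon as
every `φ` lifts. The identity of `A` has no lift for `{u₀}` (handshake lemma), so
`hom(A, A_{u₀}) < hom(A, A_∅)`. If instead some `φ : T → A` had no lift, `𝔽₂`-duality would
give a parity certificate on `T`; the parity of its fibre sums is constant on components of `A`,
and removing the root of a forest cover of `T` together with its image in `A` lowers both heights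
by one, so by induction a forest cover of `T` of height `q` yields one of the component of `u₀`.
-/

namespace TDClosed

variable {V : Type*}

section Components

def restrict (K : SimpleGraph V) (s : Set V) : SimpleGraph V where
  Adj x y := x ∈ s ∧ y ∈ s ∧ K.Adj x y
  symm := ⟨fun _ _ h => ⟨h.2.1, h.1, h.2.2.symm⟩⟩
  loopless := ⟨fun _ h => K.irrefl h.2.2⟩

/-- Note that `component K s a = {a}` when `a ∉ s`. -/
def component (K : SimpleGraph V) (s : Set V) (a : V) : Set V :=
  {b | (restrict K s).Reachable a b}

variable {K : SimpleGraph V} {s t : Set V} {a b : V}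

@[simp] theorem restrict_adj {x y : V} : (restrict K s).Adj x y ↔ x ∈ s ∧ y ∈ s ∧ K.Adj x y :=
  Iff.rfl

theorem mem_component_self : a ∈ component K s a := SimpleGraph.Reachable.refl a

theorem component_eq_of_mem (h : b ∈ component K s a) : component K s b = component K s a :=
  Set.ext fun _ => ⟨fun hc => SimpleGraph.Reachable.trans h hc, fun hc => h.symm.trans hc⟩

theorem component_induction {p : V → Prop} (ha : p a)
    (hstep : ∀ x y, x ∈ s → y ∈ s → K.Adj x y → p x → p y) (hb : b ∈ component K s a) : p b := by
  replace hb := (SimpleGraph.reachable_iff_reflTransGen a b).mp hb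
  induction hb with
  | refl => exact ha
  | tail _ hxy ih =>
    obtain ⟨hx, hy, hadj⟩ := restrict_adj.mp hxy
    exact hstep _ _ hx hy hadj ih

theorem component_subset (ha : a ∈ s) : component K s a ⊆ s :=
  fun _ hb => component_induction (p := (· ∈ s)) ha (fun _ _ _ hy _ _ => hy) hb

theorem mem_component_of_adj {x y : V} (hx : x ∈ component K s a) (hxs : x ∈ s) (hys : y ∈ s)
    (hxy : K.Adj x y) : y ∈ component K s a :=
  SimpleGraph.Reachable.trans hx (SimpleGraph.Adj.reachable (restrict_adj.mpr ⟨hxs, hys, hxy⟩))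

theorem component_mono (hst : s ⊆ t) : component K s a ⊆ component K t a :=
  fun _ hb => hb.mono fun _ _ h =>
    let ⟨hx, hy, hxy⟩ := restrict_adj.mp h
    restrict_adj.mpr ⟨hst hx, hst hy, hxy⟩

open scoped Classical in
theorem exists_sum_component_ne_zero {M : Type*} [AddCommMonoid M] [Fintype V]
    (f : V → M) (h : ∑ v with v ∈ s, f v ≠ 0) :
    ∃ a ∈ s, ∑ v with v ∈ component K s a, f v ≠ 0 := by
  rw [← Finset.sum_fiberwise (g := (restrict K s).connectedComponentMk)] at h
  obtain ⟨c, -, hc⟩ := Finset.exists_ne_zero_of_sum_ne_zero h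
  obtain ⟨a, ha, hca⟩ : ∃ a ∈ s, (restrict K s).connectedComponentMk a = c := by
    by_contra! hnone
    refine hc (Finset.sum_eq_zero fun v hv => ?_)
    simp only [Finset.mem_filter, Finset.mem_univ, true_and] at hv
    exact absurd hv.2 (hnone v hv.1)
  refine ⟨a, ha, ?_⟩
  convert hc using 2
  ext v
  simp only [Finset.mem_filter, Finset.mem_univ, true_and, ← hca,
    SimpleGraph.ConnectedComponent.eq]
  exact ⟨fun hv => ⟨component_subset ha hv, hv.symm⟩, fun hv => hv.2.symm⟩

end Components

section ForestCover

structure IsForestCoverOn (K : SimpleGraph V) (s : Set V) (q : ℕ) (le : V → V → Prop) :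
    Prop where
  refl : ∀ v ∈ s, le v v
  antisymm : ∀ u ∈ s, ∀ v ∈ s, le u v → le v u → u = v
  trans : ∀ u ∈ s, ∀ v ∈ s, ∀ w ∈ s, le u v → le v w → le u w
  chain : ∀ u ∈ s, ∀ v ∈ s, ∀ w ∈ s, le u w → le v w → le u v ∨ le v u
  adj : ∀ u ∈ s, ∀ v ∈ s, K.Adj u v → le u v ∨ le v u
  height : ∀ v ∈ s, {u | u ∈ s ∧ le u v}.ncard ≤ q

def HasForestCoverOn (K : SimpleGraph V) (s : Set V) (q : ℕ) : Prop :=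
  ∃ le, IsForestCoverOn K s q le

variable {K : SimpleGraph V} {s t : Set V} {q : ℕ} {le : V → V → Prop}

theorem hasForestCover_iff_hasForestCoverOn_univ :
    HasForestCover K q ↔ HasForestCoverOn K Set.univ q := by
  constructor
  · rintro ⟨le, h₁, h₂, h₃, h₄, h₅, h₆⟩
    exact ⟨le, fun v _ => h₁ v, fun u _ v _ => h₂ u v, fun u _ v _ w _ => h₃ u v w,
      fun u _ v _ w _ => h₄ u v w, fun u _ v _ h => h₅ h, fun v _ => by simpa using h₆ v⟩
  · rintro ⟨le, h₁, h₂, h₃, h₄, h₅, h₆⟩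
    exact ⟨le, fun v => h₁ v trivial, fun u v => h₂ u trivial v trivial,
      fun u v w => h₃ u trivial v trivial w trivial,
      fun u v w => h₄ u trivial v trivial w trivial, fun u v => h₅ u trivial v trivial,
      fun v => by simpa using h₆ v trivial⟩

theorem IsForestCoverOn.mono {q' : ℕ} (h : IsForestCoverOn K s q le) (hts : t ⊆ s)
    (hheight : ∀ v ∈ t, {u | u ∈ t ∧ le u v}.ncard ≤ q') : IsForestCoverOn K t q' le where
  refl v hv := h.refl v (hts hv)
  antisymm u hu v hv := h.antisymm u (hts hu) v (hts hv)
  trans u hu v hv w hw := h.trans u (hts hu) v (hts hv) w (hts hw)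
  chain u hu v hv w hw := h.chain u (hts hu) v (hts hv) w (hts hw)
  adj u hu v hv := h.adj u (hts hu) v (hts hv)
  height := hheight

theorem HasForestCoverOn.subset [Finite V] (h : HasForestCoverOn K s q) (hts : t ⊆ s) :
    HasForestCoverOn K t q :=
  let ⟨le, hle⟩ := h
  have hanc {v} : {u | u ∈ t ∧ le u v} ⊆ {u | u ∈ s ∧ le u v} := fun _ hu => ⟨hts hu.1, hu.2⟩
  ⟨le, hle.mono hts fun v hv =>
    (Set.ncard_le_ncard hanc).trans (hle.height v (hts hv))⟩

theorem HasForestCoverOn.eq_empty [Finite V] (h : HasForestCoverOn K s 0) : s = ∅ := by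
  obtain ⟨le, hle⟩ := h
  refine Set.eq_empty_of_forall_notMem fun v hv => ?_
  have := (Set.ncard_pos (Set.toFinite {u | u ∈ s ∧ le u v})).mpr ⟨v, hv, hle.refl v hv⟩
  exact this.ne' (Nat.le_zero.mp (hle.height v hv))

theorem HasForestCoverOn.of_diff_singleton [Finite V] {g : V}
    (h : HasForestCoverOn K (s \ {g}) q) : HasForestCoverOn K s (q + 1) := by
  obtain ⟨le, hle⟩ := h
  have mem {v} (hv : v ∈ s) (hvg : v ≠ g) : v ∈ s \ {g} := ⟨hv, hvg⟩
  refine ⟨fun x y => x = g ∨ (y ≠ g ∧ le x y), ⟨?_, ?_, ?_, ?_, ?_, fun v hv => ?_⟩⟩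
  · grind [hle.refl]
  · grind [hle.antisymm]
  · grind [hle.trans]
  · grind [hle.chain]
  · grind [hle.adj]
  by_cases hvg : v = g
  · have hsub : {u | u ∈ s ∧ (u = g ∨ (v ≠ g ∧ le u v))} ⊆ {g} :=
      fun u hu => hu.2.resolve_right fun h => h.1 hvg
    exact (Set.ncard_le_ncard hsub).trans (by simp)
  have hsub : {u | u ∈ s ∧ (u = g ∨ (v ≠ g ∧ le u v))} ⊆
      insert g {u | u ∈ s \ {g} ∧ le u v} := by
    rintro u ⟨hu, hug | ⟨-, huv⟩⟩
    · exact Or.inl hug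
    by_cases hug : u = g
    exacts [Or.inl hug, Or.inr ⟨mem hu hug, huv⟩]
  calc _ ≤ (insert g {u | u ∈ s \ {g} ∧ le u v}).ncard := Set.ncard_le_ncard hsub
    _ ≤ {u | u ∈ s \ {g} ∧ le u v}.ncard + 1 := Set.ncard_insert_le _ _
    _ ≤ q + 1 := by gcongr; exact hle.height v (mem hv hvg)

theorem hasForestCoverOn_of_forall_component [Finite V]
    (h : ∀ a ∈ s, HasForestCoverOn K (component K s a) q) : HasForestCoverOn K s q := by
  classical
  -- choosing the cover as a function of the component *set* makes all its vertices agree on it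
  let leOf : Set V → V → V → Prop := fun c =>
    if hc : HasForestCoverOn K c q then hc.choose else fun _ _ => False
  have hleOf (a : V) (ha : a ∈ s) :
      IsForestCoverOn K (component K s a) q (leOf (component K s a)) := by
    dsimp only [leOf]
    rw [dif_pos (h a ha)]
    exact (h a ha).choose_spec
  refine ⟨fun x y => x ∈ component K s y ∧ leOf (component K s y) x y,
    ⟨?_, ?_, ?_, ?_, ?_, fun v hv => ?_⟩⟩
  · exact fun v hv => ⟨mem_component_self, (hleOf v hv).refl v mem_component_self⟩
  · rintro u - v hv ⟨huv, hle⟩ ⟨hvu, hle'⟩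
    rw [component_eq_of_mem huv] at hle'
    exact (hleOf v hv).antisymm u huv v mem_component_self hle hle'
  · rintro u - v - w hw ⟨huv, hle⟩ ⟨hvw, hle'⟩
    rw [component_eq_of_mem hvw] at huv hle
    exact ⟨huv, (hleOf w hw).trans u huv v hvw w mem_component_self hle hle'⟩
  · rintro u - v - w hw ⟨huw, hle⟩ ⟨hvw, hle'⟩
    rw [component_eq_of_mem hvw, component_eq_of_mem huw]
    exact ((hleOf w hw).chain u huw v hvw w mem_component_self hle hle').imp
      (fun h => ⟨huw, h⟩) (fun h => ⟨hvw, h⟩)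
  · intro u hu v hv huv
    have hvu : v ∈ component K s u := mem_component_of_adj mem_component_self hu hv huv
    rw [component_eq_of_mem hvu]
    exact ((hleOf u hu).adj u mem_component_self v hvu huv).imp
      (fun h => ⟨mem_component_self, h⟩) (fun h => ⟨hvu, h⟩)
  exact (Set.ncard_le_ncard fun u hu => hu.2).trans ((hleOf v hv).height v mem_component_self)

theorem HasForestCoverOn.exists_root [Finite V] (h : HasForestCoverOn K s (q + 1)) {a : V}
    (ha : a ∈ s) : ∃ r, ∀ t ⊆ component K s a, r ∉ t → HasForestCoverOn K t q := by
  obtain ⟨le, hle⟩ := h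
  let anc (v : V) : Set V := {u | u ∈ s ∧ le u v}
  obtain ⟨r, ⟨hr, hra⟩, hmin⟩ :=
    Set.exists_min_image (anc a) (fun v => (anc v).ncard) (Set.toFinite _) ⟨a, ha, hle.refl a ha⟩
  have hroot : ∀ u ∈ s, le u r → u = r := by
    intro u hu hur
    by_contra hne
    have hsub : anc u ⊆ anc r := fun w hw => ⟨hw.1, hle.trans w hw.1 u hu r hr hw.2 hur⟩
    replace hsub : anc u ⊂ anc r := (Set.ssubset_iff_of_subset hsub).mpr
      ⟨r, ⟨hr, hle.refl r hr⟩, fun hru => hne (hle.antisymm u hu r hr hur hru.2)⟩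
    exact (Set.ncard_lt_ncard hsub).not_ge
      (hmin u ⟨hu, hle.trans u hu r hr a ha hur hra⟩)
  have hbelow : ∀ v ∈ component K s a, le r v := by
    refine fun v hv => component_induction hra (fun x y hx hy hxy hrx => ?_) hv
    rcases hle.adj x hx y hy hxy with hle' | hle'
    · exact hle.trans r hr x hx y hy hrx hle'
    rcases hle.chain r hr y hy x hx hrx hle' with hry | hyr
    · exact hry
    · exact hroot y hy hyr ▸ hle.refl r hr
  refine ⟨r, fun t hta hrt => ⟨le, hle.mono (hta.trans (component_subset ha)) fun v hv => ?_⟩⟩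
  have hsub : {u | u ∈ t ∧ le u v} ⊆ anc v \ {r} :=
    fun u hu => ⟨⟨component_subset ha (hta hu.1), hu.2⟩, fun hur => hrt (hur ▸ hu.1)⟩
  have hv' : v ∈ s := component_subset ha (hta hv)
  rw [← Nat.add_le_add_iff_right (n := 1)]
  calc _ ≤ (anc v \ {r}).ncard + 1 := Nat.add_le_add_right (Set.ncard_le_ncard hsub) 1
    _ = (anc v).ncard := Set.ncard_sdiff_singleton_add_one ⟨hr, hbelow v (hta hv)⟩
    _ ≤ q + 1 := hle.height v hv'

end ForestCover

section Certificate

open scoped Classical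

variable {VT VK : Type*} [Fintype VT] {T : SimpleGraph VT} {K : SimpleGraph VK} {φ : VT → VK}
  {sT sT' : Set VT} {tK tK' : Set VK} {W : VT → ZMod 2} {E : VT → VT → ZMod 2}

/-- The `𝔽₂`-weights `W` on vertices and `E` on edges of `T` witness that the parity
constraints of a lift of `φ` (restricted to `sT` over `tK`) are inconsistent. -/
structure IsParityCertificate (T : SimpleGraph VT) (K : SimpleGraph VK) (φ : VT → VK)
    (sT : Set VT) (tK : Set VK) (W : VT → ZMod 2) (E : VT → VT → ZMod 2) : Prop where
  symm : ∀ u v, E u v = E v u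
  balanced : ∀ v ∈ sT, ∀ g ∈ tK, K.Adj (φ v) g →
    W v = ∑ c with c ∈ sT ∧ T.Adj v c ∧ φ c = g, E v c

noncomputable def fiberSum (φ : VT → VK) (sT : Set VT) (W : VT → ZMod 2) (g : VK) : ZMod 2 :=
  ∑ v with v ∈ sT ∧ φ v = g, W v

theorem IsParityCertificate.fiberSum_eq_of_adj (hc : IsParityCertificate T K φ sT tK W E)
    {g g' : VK} (hg : g ∈ tK) (hg' : g' ∈ tK) (hgg' : K.Adj g g') :
    fiberSum φ sT W g = fiberSum φ sT W g' := by
  have hdouble : ∀ g ∈ tK, ∀ g' ∈ tK, K.Adj g g' → fiberSum φ sT W g =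
      ∑ v, ∑ c, if (v ∈ sT ∧ φ v = g) ∧ (c ∈ sT ∧ T.Adj v c ∧ φ c = g') then E v c else 0 := by
    intro g _ g' hg' hgg'
    rw [fiberSum, Finset.sum_filter]
    refine Finset.sum_congr rfl fun v _ => ?_
    by_cases hv : v ∈ sT ∧ φ v = g
    · simp only [hv, true_and, if_true]
      rw [hc.balanced v hv.1 g' hg' (hv.2 ▸ hgg'), Finset.sum_filter]
    · simp [hv]
  rw [hdouble g hg g' hg' hgg', hdouble g' hg' g hg hgg'.symm, Finset.sum_comm]
  refine Finset.sum_congr rfl fun v _ => Finset.sum_congr rfl fun c _ => ?_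
  rw [hc.symm, T.adj_comm]
  congr 1
  exact propext (by tauto)

theorem IsParityCertificate.fiberSum_eq_of_mem_component
    (hc : IsParityCertificate T K φ sT tK W E) {u g : VK} (hg : g ∈ component K tK u) :
    fiberSum φ sT W g = fiberSum φ sT W u :=
  component_induction (p := fun g => fiberSum φ sT W g = fiberSum φ sT W u) rfl
    (fun _ _ hx hy hxy h => (hc.fiberSum_eq_of_adj hx hy hxy).symm.trans h) hg

theorem IsParityCertificate.mono (hc : IsParityCertificate T K φ sT tK W E) (hsT : sT' ⊆ sT)
    (htK : tK' ⊆ tK) (hclosed : ∀ v ∈ sT', ∀ c ∈ sT, T.Adj v c → φ c ∈ tK' → c ∈ sT') :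
    IsParityCertificate T K φ sT' tK' W E where
  symm := hc.symm
  balanced v hv g hg hadj := by
    rw [hc.balanced v (hsT hv) g (htK hg) hadj]
    refine Finset.sum_congr (Finset.filter_congr fun c _ => ⟨fun h => ⟨?_, h.2⟩,
      fun h => ⟨hsT h.1, h.2⟩⟩) fun _ _ => rfl
    exact hclosed v hv c h.1 h.2.1 (h.2.2 ▸ hg)

theorem exists_fiberSum_component_ne_zero {g : VK} (h : fiberSum φ sT W g ≠ 0) :
    ∃ v₀ ∈ sT, fiberSum φ (component T sT v₀) W g ≠ 0 := by
  simp only [fiberSum, ← Finset.filter_filter, Finset.sum_filter (p := fun v => φ v = g)] at h ⊢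
  exact exists_sum_component_ne_zero _ h

theorem hasForestCoverOn_component_of_isParityCertificate [Finite VK] (q : ℕ)
    (hc : IsParityCertificate T K φ sT tK W E) {u₀ : VK} (hu₀ : u₀ ∈ tK)
    (hodd : fiberSum φ sT W u₀ ≠ 0) (hcov : HasForestCoverOn T sT q) :
    HasForestCoverOn K (component K tK u₀) q := by
  induction q generalizing sT tK u₀ with
  | zero =>
    refine absurd ?_ hodd
    simp [fiberSum, hcov.eq_empty]
  | succ q ih =>
    obtain ⟨v₀, hv₀, hodd₁⟩ := exists_fiberSum_component_ne_zero (T := T) hodd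
    set sT₁ := component T sT v₀
    have hc₁ : IsParityCertificate T K φ sT₁ tK W E :=
      hc.mono (component_subset hv₀) subset_rfl fun v hv c hcs hvc _ =>
        mem_component_of_adj hv (component_subset hv₀ hv) hcs hvc
    obtain ⟨r, hr⟩ := hcov.exists_root hv₀
    set sT' := {v | v ∈ sT₁ ∧ φ v ≠ φ r}
    have hc' : IsParityCertificate T K φ sT' (tK \ {φ r}) W E :=
      hc₁.mono (fun v hv => hv.1) Set.sdiff_subset fun v hv c hcs _ hφc => ⟨hcs, hφc.2⟩
    have hcov' : HasForestCoverOn T sT' q := hr sT' (fun v hv => hv.1) fun h => h.2 rfl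
    have hodd' : ∀ g ∈ component K tK u₀ \ {φ r}, fiberSum φ sT' W g ≠ 0 := by
      intro g hg
      have hfib : fiberSum φ sT' W g = fiberSum φ sT₁ W g := by
        unfold fiberSum
        congr 1
        ext v
        simp only [Finset.mem_filter, Finset.mem_univ, true_and]
        exact ⟨fun h => ⟨h.1.1, h.2⟩, fun h => ⟨⟨h.1, h.2 ▸ hg.2⟩, h.2⟩⟩
      rwa [hfib, hc₁.fiberSum_eq_of_mem_component hg.1]
    refine HasForestCoverOn.of_diff_singleton (g := φ r)
      (hasForestCoverOn_of_forall_component fun g hg => ?_)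
    exact (ih hc' ⟨component_subset hu₀ hg.1, hg.2⟩ (hodd' g hg) hcov').subset
      (component_mono (Set.sdiff_subset_sdiff_left (component_subset hu₀)))

end Certificate

theorem even_ncard_symmDiff_iff {α : Type*} [Finite α] (X Y : Set α) :
    Even (symmDiff X Y).ncard ↔ (Even X.ncard ↔ Even Y.ncard) := by
  have hX := Set.ncard_inter_add_ncard_sdiff_eq_ncard X Y
  have hY := Set.ncard_inter_add_ncard_sdiff_eq_ncard Y X
  rw [Set.inter_comm] at hY
  rw [Set.symmDiff_def, Set.ncard_union_eq disjoint_sdiff_sdiff]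
  simp only [Nat.even_iff]
  omega

theorem homCount_eq_natCard_hom {V W : Type*} (F : SimpleGraph V) (G : SimpleGraph W) :
    homCount F G = Nat.card (F →g G) := by
  rw [homCount, ← Nat.card_coe_set_eq]
  exact Nat.card_congr
    ⟨fun f => ⟨f.1, @fun _ _ h => f.2 h⟩, fun f => ⟨f, fun _ _ h => f.map_rel h⟩, fun _ => rfl,
      fun _ => rfl⟩

section Lifts

variable {VT VA : Type*} {T : SimpleGraph VT} {A : SimpleGraph VA} {U U' : Set VA}
  {φ : VT → VA} {S S' : VT → Set (Sym2 VA)}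

/-- The data `S` that make `v ↦ (φ v, S v)` a homomorphism from `T` to `CFI A U`. -/
def Lifts (T : SimpleGraph VT) (A : SimpleGraph VA) (U : Set VA) (φ : VT → VA) :
    Set (VT → Set (Sym2 VA)) :=
  {S | (∀ v, S v ⊆ A.incidenceSet (φ v) ∧ (Even (S v).ncard ↔ φ v ∉ U)) ∧
    ∀ ⦃u v⦄, T.Adj u v → A.Adj (φ u) (φ v) ∧ s(φ u, φ v) ∉ symmDiff (S u) (S v)}

def homCFIEquiv (T : SimpleGraph VT) (A : SimpleGraph VA) (U : Set VA) :
    (T →g CFI A U) ≃ Σ φ : VT → VA, Lifts T A U φ where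
  toFun f := ⟨fun v => (f v).1.1, fun v => (f v).1.2, fun v => (f v).2, fun _ _ h => f.map_rel h⟩
  invFun p := ⟨fun v => ⟨(p.1 v, p.2.1 v), p.2.2.1 v⟩, fun h => p.2.2.2 h⟩
  left_inv _ := rfl
  right_inv _ := rfl

theorem symmDiff_mem_lifts [Finite VA] (hS : S ∈ Lifts T A U φ) (hS' : S' ∈ Lifts T A U' φ) :
    (fun v => symmDiff (S v) (S' v)) ∈ Lifts T A (symmDiff U U') φ := by
  refine ⟨fun v => ⟨?_, ?_⟩, fun u v huv => ⟨(hS.2 huv).1, ?_⟩⟩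
  · exact symmDiff_le_sup.trans (sup_le (hS.1 v).1 (hS'.1 v).1)
  · rw [even_ncard_symmDiff_iff, (hS.1 v).2, (hS'.1 v).2, Set.mem_symmDiff]
    tauto
  · have h := (hS.2 huv).2
    have h' := (hS'.2 huv).2
    simp only [Set.mem_symmDiff] at h h' ⊢
    tauto

theorem mem_lifts_empty_iff :
    (fun _ => ∅) ∈ Lifts T A ∅ φ ↔ ∀ ⦃u v⦄, T.Adj u v → A.Adj (φ u) (φ v) := by
  simp [Lifts]

theorem natCard_lifts_eq [Finite VA] (hS : S ∈ Lifts T A U φ) :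
    Nat.card (Lifts T A U φ) = Nat.card (Lifts T A ∅ φ) :=
  Nat.card_congr
    { toFun S' := ⟨fun v => symmDiff (S'.1 v) (S v), by simpa using symmDiff_mem_lifts S'.2 hS⟩
      invFun S' := ⟨fun v => symmDiff (S'.1 v) (S v), by
        simpa [← Set.bot_eq_empty] using symmDiff_mem_lifts S'.2 hS⟩
      left_inv S' := by ext : 2; simp
      right_inv S' := by ext : 2; simp }

theorem homCount_CFI_eq_sum [Fintype VT] [DecidableEq VT] [Fintype VA] (T : SimpleGraph VT)
    (A : SimpleGraph VA) (U : Set VA) :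
    homCount T (CFI A U) = ∑ φ : VT → VA, Nat.card (Lifts T A U φ) := by
  rw [homCount_eq_natCard_hom, Nat.card_congr (homCFIEquiv T A U), Nat.card_sigma]

theorem natCard_lifts_le [Finite VA] :
    Nat.card (Lifts T A U φ) ≤ Nat.card (Lifts T A ∅ φ) := by
  rcases (Lifts T A U φ).eq_empty_or_nonempty with h | ⟨S, hS⟩
  · simp [h]
  · exact (natCard_lifts_eq hS).le

theorem homCount_CFI_eq [Fintype VT] [Fintype VA]
    (h : ∀ φ, (Lifts T A ∅ φ).Nonempty → (Lifts T A U φ).Nonempty) :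
    homCount T (CFI A U) = homCount T (CFI A ∅) := by
  classical
  rw [homCount_CFI_eq_sum, homCount_CFI_eq_sum]
  refine Finset.sum_congr rfl fun φ _ => ?_
  rcases (Lifts T A ∅ φ).eq_empty_or_nonempty with h₀ | h₀
  · have := natCard_lifts_le (T := T) (A := A) (U := U) (φ := φ)
    simp only [h₀, Nat.card_coe_set_eq, Set.ncard_empty] at this ⊢
    omega
  · exact natCard_lifts_eq (h φ h₀).some_mem

theorem homCount_CFI_lt [Fintype VT] [Fintype VA] (φ : VT → VA)
    (h₀ : (Lifts T A ∅ φ).Nonempty) (hU : Lifts T A U φ = ∅) :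
    homCount T (CFI A U) < homCount T (CFI A ∅) := by
  classical
  rw [homCount_CFI_eq_sum, homCount_CFI_eq_sum]
  refine Finset.sum_lt_sum (fun _ _ => natCard_lifts_le) ⟨φ, Finset.mem_univ φ, ?_⟩
  have := h₀.to_subtype
  rw [hU, Nat.card_coe_set_eq, Set.ncard_empty]
  exact Nat.card_pos

/-- The edges `e ∈ S v` form a subgraph in which `v` has degree `|S v|`; the handshake lemma
applies. -/
theorem even_ncard_of_mem_lifts_id [Fintype VA] {S : VA → Set (Sym2 VA)}
    (hS : S ∈ Lifts A A U id) : Even U.ncard := by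
  classical
  let A' : SimpleGraph VA :=
    { Adj a b := A.Adj a b ∧ s(a, b) ∈ S a
      symm := ⟨fun a b h => ⟨h.1.symm, by
        have := (hS.2 h.1).2
        rw [Set.mem_symmDiff] at this
        rw [Sym2.eq_swap]
        tauto⟩⟩
      loopless := ⟨fun a h => A.irrefl h.1⟩ }
  have hdeg : ∀ v, A'.degree v = (S v).ncard := by
    intro v
    have himage : (fun w => s(v, w)) '' A'.neighborSet v = S v := by
      ext e
      refine ⟨fun ⟨w, hw, hwe⟩ => hwe ▸ hw.2, fun he => ?_⟩
      obtain ⟨hedge, hv⟩ := (hS.1 v).1 he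
      obtain ⟨w, rfl⟩ := Sym2.mem_iff_exists.mp hv
      exact ⟨w, ⟨hedge, he⟩, rfl⟩
    rw [← himage, Set.ncard_image_of_injective _ fun _ _ h => Sym2.congr_right.mp h,
      ← SimpleGraph.card_neighborSet_eq_degree, ← Nat.card_eq_fintype_card,
      Nat.card_coe_set_eq]
  have hodd : ∀ v, Odd (A'.degree v) ↔ v ∈ U := by
    intro v
    rw [hdeg, ← Nat.not_even_iff_odd, (hS.1 v).2, id, not_not]
  have := A'.even_card_odd_degree_vertices
  rw [Set.ncard_eq_toFinset_card']
  convert this using 2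
  ext v
  simp [hodd]

theorem homCount_CFI_singleton_lt [Fintype VA] (A : SimpleGraph VA) (u₀ : VA) :
    homCount A (CFI A {u₀}) < homCount A (CFI A ∅) :=
  homCount_CFI_lt id ⟨_, mem_lifts_empty_iff.mpr fun _ _ h => h⟩
    (Set.eq_empty_of_forall_notMem fun _ hS => by simpa using even_ncard_of_mem_lifts_id hS)

end Lifts

theorem natCast_ncard_eq_sum {α : Type*} [Fintype α] (p : α → Prop) [DecidablePred p]
    (f : α → ZMod 2) : ({a | p a ∧ f a = 1}.ncard : ZMod 2) = ∑ a, if p a then f a else 0 := by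
  classical
  have h01 : ∀ b : ZMod 2, b = if b = 1 then 1 else 0 := by decide
  rw [Set.ncard_eq_toFinset_card', Set.toFinset_ofPred, ← Finset.sum_boole]
  refine Finset.sum_congr (by ext; simp) fun a _ => ?_
  by_cases ha : p a <;> simp [ha, ← h01]

open Matrix in
theorem exists_vecMul_eq_zero_dotProduct_ne_zero {ι κ F : Type*} [Field F] [Fintype ι]
    [DecidableEq ι] [Fintype κ] (M : Matrix ι κ F) (b : ι → F) (hb : ∀ x, M *ᵥ x ≠ b) :
    ∃ y, y ᵥ* M = 0 ∧ y ⬝ᵥ b ≠ 0 := by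
  have hbW : b ∉ LinearMap.range M.mulVecLin := fun ⟨x, hx⟩ => hb x hx
  rw [← Subspace.forall_mem_dualAnnihilator_apply_eq_zero_iff] at hbW
  push Not at hbW
  obtain ⟨f, hf, hfb⟩ := hbW
  set y := (dotProductEquiv F ι).symm f
  have hfy : ∀ z, f z = y ⬝ᵥ z := fun z => by
    rw [← (dotProductEquiv F ι).apply_symm_apply f]
    rfl
  refine ⟨y, funext fun j => ?_, by rwa [← hfy]⟩
  classical
  rw [Pi.zero_apply, ← mul_one ((y ᵥ* M) j), ← dotProduct_single, ← Matrix.dotProduct_mulVec,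
    ← hfy]
  exact (Submodule.mem_dualAnnihilator f).mp hf _ ⟨_, rfl⟩

section LiftEquations

open Matrix

variable {VT VA : Type*} [Fintype VT] (T : SimpleGraph VT) (A : SimpleGraph VA)
  (φ : VT → VA)

open scoped Classical in
/-- The `𝔽₂`-linear system for a lift of `φ`: the unknown `x (v, g)` says whether the edge
`s(φ v, g)` belongs to the lift at `v`; there is a parity equation for each vertex and an
agreement equation for each oriented edge of `T`. -/
noncomputable def liftMatrix : Matrix (VT ⊕ VT × VT) (VT × VA) (ZMod 2) :=
  Matrix.of <| Sum.elim (fun u p => if u = p.1 ∧ A.Adj (φ p.1) p.2 then 1 else 0)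
    fun e p => if T.Adj e.1 e.2 then
      (if e.1 = p.1 ∧ φ e.2 = p.2 then 1 else 0) + (if e.2 = p.1 ∧ φ e.1 = p.2 then 1 else 0)
    else 0

open scoped Classical in
noncomputable def liftRhs (u₀ : VA) : VT ⊕ VT × VT → ZMod 2 :=
  Sum.elim (fun u => if φ u = u₀ then 1 else 0) 0

open scoped Classical in
theorem vecMul_liftMatrix (y : VT ⊕ VT × VT → ZMod 2) (v : VT) (g : VA) :
    (y ᵥ* liftMatrix T A φ) (v, g) = (if A.Adj (φ v) g then y (Sum.inl v) else 0) +
      ∑ c, if T.Adj v c ∧ φ c = g then y (Sum.inr (v, c)) + y (Sum.inr (c, v)) else 0 := by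
  simp only [liftMatrix, Matrix.vecMul, dotProduct, Fintype.sum_prod_type, Fintype.sum_sum_type,
    Matrix.of_apply, Sum.elim_inl, Sum.elim_inr, mul_ite, mul_one, mul_zero, mul_add,
    ite_add_zero, Finset.sum_add_distrib, ite_and, Finset.sum_ite_eq', Finset.mem_univ, if_true]
  congr 2
  · rw [Finset.sum_eq_single v (fun x _ hx => by simp [hx]) (by simp)]
    simp
  · rw [Finset.sum_comm, Finset.sum_eq_single v (fun c _ hc => by simp [hc]) (by simp)]
    simp [T.adj_comm]

open scoped Classical in
theorem mulVec_liftMatrix_inl [Fintype VA] (x : VT × VA → ZMod 2) (u : VT) :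
    (liftMatrix T A φ *ᵥ x) (Sum.inl u) = ∑ g, if A.Adj (φ u) g then x (u, g) else 0 := by
  simp [liftMatrix, Matrix.mulVec, dotProduct, Fintype.sum_prod_type, ite_and]

open scoped Classical in
theorem mulVec_liftMatrix_inr [Fintype VA] (x : VT × VA → ZMod 2) (u w : VT) :
    (liftMatrix T A φ *ᵥ x) (Sum.inr (u, w)) =
      if T.Adj u w then x (u, φ w) + x (w, φ u) else 0 := by
  split_ifs with h <;>
    simp [liftMatrix, Matrix.mulVec, dotProduct, Fintype.sum_prod_type, ite_and, h, add_mul,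
      Finset.sum_add_distrib]

theorem dotProduct_liftRhs (y : VT ⊕ VT × VT → ZMod 2) (u₀ : VA) :
    y ⬝ᵥ liftRhs φ u₀ = fiberSum φ Set.univ (y ∘ Sum.inl) u₀ := by
  classical
  simp [liftRhs, dotProduct, fiberSum, Fintype.sum_sum_type, Finset.sum_filter]

theorem lifts_nonempty_of_mulVec_eq [Fintype VA] {u₀ : VA} {x : VT × VA → ZMod 2}
    (hφ : ∀ ⦃u v⦄, T.Adj u v → A.Adj (φ u) (φ v)) (hx : liftMatrix T A φ *ᵥ x = liftRhs φ u₀) :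
    (Lifts T A {u₀} φ).Nonempty := by
  classical
  let S (v : VT) : Set (Sym2 VA) := (fun g => s(φ v, g)) '' {g | A.Adj (φ v) g ∧ x (v, g) = 1}
  have hinj (v : VT) : Function.Injective fun g => s(φ v, g) := fun _ _ h => Sym2.congr_right.mp h
  have hmem (v : VT) (g : VA) : s(φ v, g) ∈ S v ↔ A.Adj (φ v) g ∧ x (v, g) = 1 :=
    (hinj v).mem_set_image
  refine ⟨S, fun v => ⟨?_, ?_⟩, fun u w huw => ⟨hφ huw, ?_⟩⟩
  · rintro _ ⟨g, hg, rfl⟩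
    exact ⟨hg.1, Sym2.mem_mk_left _ _⟩
  · have hv := congrFun hx (Sum.inl v)
    rw [mulVec_liftMatrix_inl, ← natCast_ncard_eq_sum] at hv
    rw [Set.ncard_image_of_injective _ (hinj v), ← ZMod.natCast_eq_zero_iff_even, hv]
    simp [liftRhs]
  · have he := congrFun hx (Sum.inr (u, w))
    rw [mulVec_liftMatrix_inr, if_pos huw] at he
    have hxx : x (u, φ w) = x (w, φ u) := CharTwo.add_eq_zero.mp (by simpa [liftRhs] using he)
    rw [Set.mem_symmDiff, hmem, Sym2.eq_swap, hmem, hxx]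
    have := hφ huw.symm
    tauto

theorem isParityCertificate_of_vecMul_eq_zero {y : VT ⊕ VT × VT → ZMod 2}
    (hy : y ᵥ* liftMatrix T A φ = 0) :
    IsParityCertificate T A φ Set.univ Set.univ (y ∘ Sum.inl)
      fun v c => y (Sum.inr (v, c)) + y (Sum.inr (c, v)) where
  symm _ _ := add_comm _ _
  balanced v _ g _ hadj := by
    classical
    have h := congrFun hy (v, g)
    rw [vecMul_liftMatrix, if_pos hadj, Pi.zero_apply] at h
    simp only [Function.comp_apply, Set.mem_univ, true_and, Finset.sum_filter]
    exact CharTwo.add_eq_zero.mp h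

end LiftEquations

theorem lifts_nonempty_of_hasForestCover {VT VA : Type*} [Fintype VT] [Fintype VA]
    {T : SimpleGraph VT} {A : SimpleGraph VA} {q : ℕ} {u₀ : VA} {φ : VT → VA}
    (hT : HasForestCover T q) (hA : ¬ HasForestCoverOn A (component A Set.univ u₀) q)
    (hφ : (Lifts T A ∅ φ).Nonempty) : (Lifts T A {u₀} φ).Nonempty := by
  classical
  by_contra hno
  obtain ⟨y, hy, hyb⟩ := exists_vecMul_eq_zero_dotProduct_ne_zero (liftMatrix T A φ)
    (liftRhs φ u₀) fun _ hx =>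
      hno (lifts_nonempty_of_mulVec_eq T A φ (fun _ _ h => (hφ.some_mem.2 h).1) hx)
  rw [dotProduct_liftRhs] at hyb
  exact hA (hasForestCoverOn_component_of_isParityCertificate q
    (isParityCertificate_of_vecMul_eq_zero T A φ hy) (Set.mem_univ u₀) hyb
    (hasForestCover_iff_hasForestCoverOn_univ.mp hT))

instance {W : Type*} [Finite W] (G : SimpleGraph W) (U : Set W) : Finite (CFIvert G U) := by
  unfold CFIvert
  infer_instance

noncomputable def toGraphB {W : Type*} [Finite W] (G : SimpleGraph W) : GraphB :=
  ⟨Nat.card W, G.comap (Finite.equivFin W).symm⟩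

theorem homCount_toGraphB {V W : Type*} [Finite W] (F : SimpleGraph V) (G : SimpleGraph W) :
    homCount F (toGraphB G).2 = homCount F G := by
  rw [homCount_eq_natCard_hom, homCount_eq_natCard_hom]
  exact Nat.card_congr (SimpleGraph.Iso.refl.homCongr (SimpleGraph.Iso.comap _ G))

end TDClosed

open TDClosed

theorem td_closed_general (q : ℕ) : hdCl (TDclass q) = TDclass q := by
  refine Set.Subset.antisymm (fun A hA => ?_) fun A hA G H hGH => hGH A hA
  by_contra hAq
  obtain ⟨u₀, hu₀⟩ : ∃ u₀, ¬ HasForestCoverOn A.2 (component A.2 Set.univ u₀) q := by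
    by_contra! h
    exact hAq (hasForestCover_iff_hasForestCoverOn_univ.mpr
      (hasForestCoverOn_of_forall_component fun a _ => h a))
  have hindist : HomIndist (TDclass q) (toGraphB (CFI A.2 ∅)).2 (toGraphB (CFI A.2 {u₀})).2 := by
    intro T hT
    rw [homCount_toGraphB, homCount_toGraphB]
    exact (homCount_CFI_eq fun φ hφ => lifts_nonempty_of_hasForestCover hT hu₀ hφ).symm
  have hcount := hA _ _ hindist
  rw [homCount_toGraphB, homCount_toGraphB] at hcount
  exact (homCount_CFI_singleton_lt A.2 u₀).ne hcount.symm

/-- For `q ≥ 1`, the class `TD_q` of graphs of treedepth at most `q` is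
homomorphism distinguishing closed. -/
theorem td_closed (q : ℕ) (hq : 1 ≤ q) : hdCl (TDclass q) = TDclass q :=
  td_closed_general q
end

section
/- Let k, q ≥ 1 and let G be a finite simple graph. Cops has a winning strategy in the monotone q-round k-cops-and-robber game monCR^k_q(G) if and only if G ∈ T^k_q, i.e. G admits a k-pebble forest cover of depth at most q. -/
set_option maxHeartbeats 1000000

/-!
Cops play a pebble forest cover top-down: while the robber is in the subtree of `x`, the child of
the last occupied vertex on the way to him, the cop with pebble `peb x` moves to `x`. The pebble
condition says that every ancestor of `x` adjacent to the subtree still carries the last copy of its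
pebble, so it is still occupied; the robber is therefore confined to ever smaller subtrees and is
caught within `q` rounds, and the escape space never grows.

Conversely, a monotone strategy is read off as a forest. When a cop moves into the robber's region,
the new vertex becomes the root of the region, labelled by the moving cop, and the forests built
for the components of the rest of the region are hung below it. Monotonicity says the vertex the
cop left has no neighbour in the region, so the invariant that no pebble is reused below a neighbour
of its cop survives the move, and this invariant is exactly the pebble condition at the new root.
-/

open Finset Function

section

variable {V : Type*} {k : ℕ} {G : SimpleGraph V}

namespace RobberMove

variable {A B : Finset (V ⊕ Fin k)} {u v w : V}

theorem refl (h : Sum.inl v ∉ A) : RobberMove G A v v :=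
  ⟨.nil, by simpa using h⟩

theorem right_notMem : RobberMove G A v u → Sum.inl u ∉ A :=
  fun ⟨p, hp⟩ => hp u p.end_mem_support

theorem symm : RobberMove G A v u → RobberMove G A u v :=
  fun ⟨p, hp⟩ => ⟨p.reverse, by simpa using hp⟩

theorem trans : RobberMove G A v u → RobberMove G A u w → RobberMove G A v w :=
  fun ⟨p, hp⟩ ⟨p', hp'⟩ =>
    ⟨p.append p', by simp only [SimpleGraph.Walk.mem_support_append_iff]; grind⟩

theorem of_adj (hadj : G.Adj v u) (hv : Sum.inl v ∉ A) (hu : Sum.inl u ∉ A) :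
    RobberMove G A v u :=
  ⟨hadj.toWalk, by simp [hv, hu]⟩

theorem anti (hAB : A ⊆ B) : RobberMove G B v u → RobberMove G A v u :=
  fun ⟨p, hp⟩ => ⟨p, fun x hx hxA => hp x hx (hAB hxA)⟩

theorem confined [DecidableEq V] {S : Set V}
    (hS : ∀ x y, G.Adj x y → x ∈ S → y ∉ S → Sum.inl y ∈ A) (hv : v ∈ S) :
    RobberMove G A v u → ∃ p : G.Walk v u, ∀ x ∈ p.support, Sum.inl x ∉ A ∧ x ∈ S := by
  rintro ⟨p, hp⟩
  refine ⟨p, fun x hx => ⟨hp x hx, by_contra fun hxS => ?_⟩⟩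
  obtain ⟨d, hd, hdS, hdS'⟩ := (p.takeUntil x hx).exists_boundary_dart S hv hxS
  exact hp _ (p.support_takeUntil_subset_support hx
    ((p.takeUntil x hx).dart_snd_mem_support_of_mem_darts hd)) (hS _ _ d.adj hdS hdS')

end RobberMove

theorem not_robberMove_of_adj_vacated [DecidableEq V] {X Y : Finset (V ⊕ Fin k)} {v z a : V}
    (hmono : ∀ u, RobberMove G (X ∩ Y) v u → RobberMove G X v u) (hzX : Sum.inl z ∈ X)
    (hzY : Sum.inl z ∉ Y) (hza : G.Adj z a) : ¬ RobberMove G X v a := fun ha =>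
  have ha' := ha.anti inter_subset_left
  have hz : RobberMove G (X ∩ Y) v z :=
    ha'.trans (.of_adj hza.symm ha'.right_notMem fun h => hzY (mem_inter.1 h).2)
  (hmono z hz).right_notMem hzX

namespace PebbleForestCover

variable {q : ℕ} (P : PebbleForestCover G k q)

theorem exists_least [Finite V] {v : V} {s : Set V} (hs : ∀ u ∈ s, P.le u v)
    (hne : s.Nonempty) : ∃ m ∈ s, ∀ u ∈ s, P.le m u := by
  let lt : V → V → Prop := fun a b => P.le a b ∧ a ≠ b
  have : IsTrans V lt := ⟨fun a b c hab hbc => ⟨P.le_trans _ _ _ hab.1 hbc.1,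
    fun h => hab.2 (P.le_antisymm _ _ hab.1 (h ▸ hbc.1))⟩⟩
  have : Std.Irrefl lt := ⟨fun a h => h.2 rfl⟩
  obtain ⟨m, hm, hmin⟩ := (Finite.wellFounded_of_trans_of_irrefl lt).has_min s hne
  refine ⟨m, hm, fun u hu => ?_⟩
  rcases P.downChain u m v (hs u hu) (hs m hm) with h | h
  · obtain rfl : u = m := by_contra fun e => hmin u hu ⟨h, e⟩
    exact P.le_refl u
  · exact h

def AncestorClosed (A : Set V) : Prop := ∀ u w, P.le u w → w ∈ A → u ∈ A

theorem exists_next [Finite V] {A : Set V} {v : V} (hAv : ∀ u ∈ A, P.le u v)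
    (hA : P.AncestorClosed A) (hvA : v ∉ A) :
    ∃ x, P.le x v ∧ x ∉ A ∧ (∀ u ∈ insert x A, P.le u x) ∧ P.AncestorClosed (insert x A) := by
  obtain ⟨x, ⟨hxv, hxA⟩, hleast⟩ :=
    P.exists_least (s := {u | P.le u v ∧ u ∉ A}) (fun u hu => hu.1) ⟨v, P.le_refl v, hvA⟩
  have hA'x : ∀ u ∈ insert x A, P.le u x := by
    rintro u (rfl | hu)
    · exact P.le_refl u
    · exact (P.downChain u x v (hAv u hu) hxv).resolve_right fun h => hxA (hA _ _ h hu)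
  refine ⟨x, hxv, hxA, hA'x, fun u w huw hw => ?_⟩
  by_cases hu : u ∈ A
  · exact Set.mem_insert_of_mem _ hu
  have hux := P.le_trans _ _ _ huw (hA'x w hw)
  exact .inl (P.le_antisymm _ _ hux (hleast u ⟨P.le_trans _ _ _ hux hxv, hu⟩))

open Classical in
/-- The cop position once the vertices of the root path `A` have been occupied from the top:
cop `p` sits on the last vertex of `A` carrying pebble `p`, or on its clique vertex. -/
noncomputable def copSlot (A : Set V) (p : Fin k) : V ⊕ Fin k :=
  let B := {u ∈ A | P.peb u = p}
  if h : ∃ u ∈ B, ∀ w ∈ B, P.le w u then .inl h.choose else .inr p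

variable {P}

theorem copSlot_eq_inl {A : Set V} {u : V} (hu : u ∈ A)
    (hmax : ∀ w ∈ A, P.peb w = P.peb u → P.le w u) : P.copSlot A (P.peb u) = .inl u := by
  have h : ∃ g ∈ {w ∈ A | P.peb w = P.peb u}, ∀ w ∈ {w ∈ A | P.peb w = P.peb u}, P.le w g :=
    ⟨u, ⟨hu, rfl⟩, fun w hw => hmax w hw.1 hw.2⟩
  rw [copSlot, dif_pos h]
  obtain ⟨hg, hgmax⟩ := h.choose_spec
  exact congrArg Sum.inl (P.le_antisymm _ _ (hmax _ hg.1 hg.2) (hgmax u ⟨hu, rfl⟩))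

theorem copSlot_empty (p : Fin k) : P.copSlot ∅ p = .inr p := by
  simp [copSlot]

theorem mem_of_copSlot_eq_inl {A : Set V} {p : Fin k} {u : V} (h : P.copSlot A p = .inl u) :
    u ∈ A ∧ P.peb u = p := by
  rw [copSlot] at h
  split_ifs at h with hex
  cases h
  exact hex.choose_spec.1

theorem copSlot_injective (A : Set V) : Injective (P.copSlot A) := by
  intro p p' h
  rcases hp : P.copSlot A p with u | c
  · rw [hp] at h
    rw [← (mem_of_copSlot_eq_inl hp).2, ← (mem_of_copSlot_eq_inl h.symm).2]
  · have hc : ∀ {p}, P.copSlot A p = .inr c → p = c := fun h => by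
      rw [copSlot] at h; split_ifs at h; exact Sum.inr_injective h
    exact (hc hp).trans (hc (hp ▸ h).symm).symm

theorem copSlot_insert_of_ne {A : Set V} {x : V} {p : Fin k} (hp : p ≠ P.peb x) :
    P.copSlot (insert x A) p = P.copSlot A p := by
  have : {u ∈ insert x A | P.peb u = p} = {u ∈ A | P.peb u = p} := by
    ext u; simp only [Set.mem_sep_iff, Set.mem_insert_iff]; grind
  rw [copSlot, copSlot, this]

theorem copSlot_insert_self {A : Set V} {x : V} (hAx : ∀ w ∈ A, P.le w x) :
    P.copSlot (insert x A) (P.peb x) = .inl x := by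
  refine copSlot_eq_inl (Set.mem_insert x A) fun w hw _ => ?_
  rcases hw with rfl | hw
  exacts [P.le_refl w, hAx w hw]

theorem image_copSlot_inter_insert [DecidableEq V] {A : Set V} {x : V} (hxA : x ∉ A)
    (hAx : ∀ w ∈ A, P.le w x) :
    univ.image (P.copSlot A) ∩ univ.image (P.copSlot (insert x A)) =
      (univ.image (P.copSlot (insert x A))).erase (.inl x) := by
  ext z
  simp only [mem_inter, mem_erase, mem_image, mem_univ, true_and]
  constructor
  · rintro ⟨⟨p, rfl⟩, hz⟩
    exact ⟨fun h => hxA (mem_of_copSlot_eq_inl h).1, hz⟩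
  · rintro ⟨hz, p, rfl⟩
    have hp : p ≠ P.peb x := by
      rintro rfl
      exact hz (copSlot_insert_self hAx)
    exact ⟨⟨p, (copSlot_insert_of_ne hp).symm⟩, p, rfl⟩

theorem copSlot_eq_inl_of_adj {A : Set V} {x a b : V} (hxA : x ∈ A) (hAx : ∀ w ∈ A, P.le w x)
    (hA : P.AncestorClosed A) (hab : G.Adj a b) (hxa : P.le x a)
    (hxb : ¬ P.le x b) : P.copSlot A (P.peb b) = .inl b := by
  have hba : P.le b a := (P.cover hab).resolve_left fun h => hxb (P.le_trans _ _ _ hxa h)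
  have hbx : P.le b x := (P.downChain b x a hba hxa).resolve_right hxb
  refine copSlot_eq_inl (hA b x hbx hxA) fun w hw hpw => ?_
  by_cases e : w = b
  · exact e ▸ P.le_refl b
  have hwa := P.le_trans _ _ _ (hAx w hw) hxa
  refine (P.downChain w b a hwa hba).resolve_right fun hbw => ?_
  exact P.pebbleCond hab.symm hba hbw hwa (Ne.symm e) hpw.symm

variable (P)

theorem monCopsCatch_copSlot [Finite V] [DecidableEq V] :
    ∀ (r : ℕ) (A : Set V) (v : V), (∀ u ∈ A, P.le u v) → P.AncestorClosed A →
      v ∉ A → q ≤ A.ncard + r → MonCopsCatch G k r (univ.image (P.copSlot A)) v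
  | 0, A, v, hAv, _, hvA, hq => by
    have := Set.ncard_le_ncard (Set.insert_subset (P.le_refl v) hAv : insert v A ⊆ {u | P.le u v})
    rw [Set.ncard_insert_of_notMem hvA] at this
    have := P.heightLE v
    omega
  | r + 1, A, v, hAv, hA, hvA, hq => by
    obtain ⟨x, hxv, hxA, hA'x, hA'low⟩ := P.exists_next hAv hA hvA
    have hAx : ∀ u ∈ A, P.le u x := fun u hu => hA'x u (Set.mem_insert_of_mem x hu)
    set Y := univ.image (P.copSlot (insert x A))
    have hxY : .inl x ∈ Y := mem_image.2 ⟨_, mem_univ _, copSlot_insert_self hAx⟩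
    have hYcard : Y.card = k := by
      rw [card_image_of_injective _ (copSlot_injective _), card_univ, Fintype.card_fin]
    have hXY := P.image_copSlot_inter_insert hxA hAx
    have hboundary : ∀ a b, G.Adj a b → a ∈ {u | P.le x u} → b ∉ {u | P.le x u} →
        .inl b ∈ univ.image (P.copSlot A) ∩ Y := fun a b hab ha hb => by
      rw [hXY, mem_erase]
      exact ⟨fun h => hb (Sum.inl_injective h ▸ P.le_refl x), mem_image.2
        ⟨_, mem_univ _, copSlot_eq_inl_of_adj (Set.mem_insert x A) hA'x hA'low hab ha hb⟩⟩
    refine ⟨Y, hYcard, by rw [hXY, card_erase_of_mem hxY, hYcard], fun u hu => ?_, fun u hu => ?_⟩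
    · obtain ⟨p, hp⟩ := hu.confined hboundary hxv
      refine ⟨p, fun w hw hwX => hxA (hA _ _ (hp w hw).2 ?_)⟩
      obtain ⟨c, -, hc⟩ := mem_image.1 hwX
      exact (mem_of_copSlot_eq_inl hc).1
    · obtain ⟨p, hp⟩ := hu.confined hboundary hxv
      have hxu : P.le x u := (hp u p.end_mem_support).2
      by_cases hux : u = x
      · exact .inl (hux ▸ hxY)
      refine .inr (monCopsCatch_copSlot r _ u (fun w hw => P.le_trans _ _ _ (hA'x w hw) hxu)
        hA'low ?_ ?_)
      · rintro (h | h)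
        exacts [hux h, hxA (hA _ _ hxu h)]
      · rw [Set.ncard_insert_of_notMem hxA]
        omega

end PebbleForestCover

theorem PebbleForestCover.monCopsWinGame [Finite V] [DecidableEq V] {q : ℕ}
    (P : PebbleForestCover G k q) : MonCopsWinGame G k q := by
  intro v
  have h := P.monCopsCatch_copSlot q ∅ v (by simp) (fun _ _ _ => id) (Set.notMem_empty v) (by simp)
  rwa [funext copSlot_empty] at h

/-- `(le, peb)` is a pebble forest cover of the region `C` of height at most `r` in which
pebble `i` is never used below a neighbour of the vertex occupied by cop `i`, so that this
vertex can later be put on top of `C` with pebble `i`. -/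
structure IsRegionCover (G : SimpleGraph V) (σ : Fin k → V ⊕ Fin k) (C : Set V) (r : ℕ)
    (le : V → V → Prop) (peb : V → Fin k) : Prop where
  mem : ∀ a b, le a b → a ∈ C ∧ b ∈ C
  refl : ∀ a ∈ C, le a a
  antisymm : ∀ a b, le a b → le b a → a = b
  trans : ∀ a b c, le a b → le b c → le a c
  downChain : ∀ a b c, le a c → le b c → le a b ∨ le b a
  cover : ∀ a b, G.Adj a b → a ∈ C → b ∈ C → le a b ∨ le b a
  pebbleCond : ∀ a b c, G.Adj a b → le a b → le a c → le c b → a ≠ c → peb a ≠ peb c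
  height : ∀ b ∈ C, {a | le a b}.ncard ≤ r
  guard : ∀ i z a b, σ i = .inl z → G.Adj z a → a ∈ C → le b a → peb b ≠ i

namespace IsRegionCover

variable {σ : Fin k → V ⊕ Fin k} {C : Set V} {r : ℕ} {le : V → V → Prop} {peb : V → Fin k}

def toPebbleForestCover (D : IsRegionCover G σ .univ r le peb) : PebbleForestCover G k r where
  le := le
  le_refl v := D.refl v trivial
  le_antisymm := D.antisymm
  le_trans := D.trans
  downChain := D.downChain
  peb := peb
  cover _ _ h := D.cover _ _ h trivial trivial
  pebbleCond _ _ _ h := D.pebbleCond _ _ _ h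
  heightLE v := D.height v trivial

theorem of_update {i : Fin k} {y : V ⊕ Fin k} (D : IsRegionCover G (update σ i y) C r le peb)
    (hi : ∀ z a, σ i = .inl z → G.Adj z a → a ∉ C) : IsRegionCover G σ C (r + 1) le peb :=
  { D with
    height := fun b hb => (D.height b hb).trans r.le_succ
    guard := fun j z a b hj hza ha hba => by
      obtain rfl | hji := eq_or_ne j i
      · exact absurd ha (hi z a hj hza)
      · exact D.guard j z a b (by rwa [update_of_ne hji]) hza ha hba }

theorem insertRoot [Finite V] [DecidableEq V] {i : Fin k} {y : V}
    (D : IsRegionCover G (update σ i (.inl y)) C r le peb) (hy : y ∉ C)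
    (hi : ∀ z a, σ i = .inl z → G.Adj z a → a ∉ insert y C) :
    IsRegionCover G σ (insert y C) (r + 1) (fun a b => (a = y ∧ b ∈ insert y C) ∨ le a b)
      (update peb y i) where
  mem a b := by have := D.mem a b; grind
  refl a := by have := D.refl a; grind
  antisymm a b := by have := D.mem a b; have := D.mem b a; have := D.antisymm a b; grind
  trans a b c := by
    have := D.mem a b; have := D.mem b c; have := D.trans a b c; grind
  downChain a b c := by
    have := D.mem a c; have := D.mem b c; have := D.downChain a b c; grind
  cover a b := by have := D.cover a b; grind
  pebbleCond a b c hab := by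
    rintro (⟨rfl, -⟩ | hab') hac hcb hne
    · have hcb' : le c b := hcb.resolve_left fun h => hne h.1.symm
      rw [update_self, update_of_ne (Ne.symm hne)]
      exact (D.guard _ _ b c (update_self _ _ _) hab (D.mem c b hcb').2 hcb').symm
    · have ha : a ≠ y := fun h => hy (h ▸ (D.mem a b hab').1)
      have hac' : le a c := hac.resolve_left fun h => ha h.1
      have hc : c ≠ y := fun h => hy (h ▸ (D.mem a c hac').2)
      rw [update_of_ne ha, update_of_ne hc]
      exact D.pebbleCond a b c hab hab' hac' (hcb.resolve_left fun h => hc h.1) hne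
  height b _ := by
    have hsub : {a | (a = y ∧ b ∈ insert y C) ∨ le a b} ⊆ insert y {a | le a b} := by
      rintro a (⟨rfl, -⟩ | h)
      · exact Set.mem_insert _ _
      · exact Set.mem_insert_of_mem _ h
    have hb : {a | le a b}.ncard ≤ r := by
      by_cases hbC : b ∈ C
      · exact D.height b hbC
      · have : {a | le a b} = ∅ := Set.eq_empty_of_forall_notMem fun a h => hbC (D.mem a b h).2
        rw [this, Set.ncard_empty]
        exact r.zero_le
    calc _ ≤ (insert y {a | le a b}).ncard := Set.ncard_le_ncard hsub
      _ ≤ r + 1 := (Set.ncard_insert_le _ _).trans (by omega)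
  guard j z a b hj hza ha hba := by
    obtain rfl | hji := eq_or_ne j i
    · exact absurd ha (hi z a hj hza)
    by_cases hb : b = y
    · rw [hb, update_self]
      exact hji.symm
    have hba' : le b a := hba.resolve_left fun h => hb h.1
    rw [update_of_ne hb]
    exact D.guard j z a b (by rwa [update_of_ne hji]) hza (D.mem b a hba').2 hba'

theorem exists_of_update [Finite V] [DecidableEq V] {i : Fin k} {y : V ⊕ Fin k}
    (D : IsRegionCover G (update σ i y) {a ∈ C | .inl a ≠ y} r le peb)
    (hi : ∀ z a, σ i = .inl z → G.Adj z a → a ∉ C) :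
    ∃ le peb, IsRegionCover G σ C (r + 1) le peb := by
  by_cases hyC : ∃ y' ∈ C, y = .inl y'
  · obtain ⟨y', hy'C, rfl⟩ := hyC
    have hins : insert y' {a ∈ C | (.inl a : V ⊕ Fin k) ≠ .inl y'} = C := by
      ext a
      simp only [Set.mem_insert_iff, Set.mem_sep_iff, ne_eq, Sum.inl.injEq]
      grind
    rw [← hins] at hi ⊢
    exact ⟨_, _, D.insertRoot (fun h => h.2 rfl) hi⟩
  · have hC : {a ∈ C | .inl a ≠ y} = C :=
      Set.sep_eq_self_iff_mem_true.2 fun a ha h => hyC ⟨a, ha, h.symm⟩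
    rw [hC] at D
    exact ⟨_, _, D.of_update hi⟩

theorem exists_of_components [NeZero k] (comp : V → Set V) (hself : ∀ a ∈ C, a ∈ comp a)
    (hsub : ∀ a ∈ C, comp a ⊆ C) (hcomp : ∀ a ∈ C, ∀ b ∈ comp a, comp b = comp a)
    (hadj : ∀ a ∈ C, ∀ b ∈ C, G.Adj a b → b ∈ comp a)
    (hcov : ∀ a ∈ C, ∃ le peb, IsRegionCover G σ (comp a) r le peb) :
    ∃ le peb, IsRegionCover G σ C r le peb := by
  have hcov' : ∀ s ∈ comp '' C, ∃ (le : V → V → Prop) (peb : V → Fin k),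
      IsRegionCover G σ s r le peb := by
    rintro _ ⟨a, ha, rfl⟩
    exact hcov a ha
  choose! le peb hD using hcov'
  have D : ∀ a ∈ C, IsRegionCover G σ (comp a) r (le (comp a)) (peb (comp a)) :=
    fun a ha => hD _ ⟨a, ha, rfl⟩
  have hsame : ∀ a b, a ∈ C → le (comp a) a b → b ∈ C ∧ comp b = comp a := fun a b ha h =>
    have hb := ((D a ha).mem a b h).2
    ⟨hsub a ha hb, hcomp a ha b hb⟩
  refine ⟨fun a b => a ∈ C ∧ le (comp a) a b, fun a => peb (comp a) a, {
    mem := fun a b ⟨ha, h⟩ => ⟨ha, (hsame a b ha h).1⟩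
    refl := fun a ha => ⟨ha, (D a ha).refl a (hself a ha)⟩
    antisymm := fun a b ⟨ha, hab⟩ ⟨_, hba⟩ =>
      (D a ha).antisymm a b hab ((hsame a b ha hab).2 ▸ hba)
    trans := fun a b c ⟨ha, hab⟩ ⟨_, hbc⟩ =>
      ⟨ha, (D a ha).trans a b c hab ((hsame a b ha hab).2 ▸ hbc)⟩
    downChain := fun a b c ⟨ha, hac⟩ ⟨hb, hbc⟩ => by
      have hba : comp b = comp a := (hsame b c hb hbc).2.symm.trans (hsame a c ha hac).2
      rw [hba] at hbc ⊢
      exact ((D a ha).downChain a b c hac hbc).imp (⟨ha, ·⟩) (⟨hb, ·⟩)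
    cover := fun a b hab ha hb => by
      have hb' := hadj a ha b hb hab
      rw [hcomp a ha b hb']
      exact ((D a ha).cover a b hab (hself a ha) hb').imp (⟨ha, ·⟩) (⟨hb, ·⟩)
    pebbleCond := fun a b c hab ⟨ha, hab'⟩ ⟨_, hac⟩ ⟨_, hcb⟩ hne => by
      rw [(hsame a c ha hac).2] at hcb ⊢
      exact (D a ha).pebbleCond a b c hab hab' hac hcb hne
    height := fun b hb => by
      have : {a | a ∈ C ∧ le (comp a) a b} = {a | le (comp b) a b} := by
        ext a
        refine ⟨fun ⟨ha, h⟩ => (hsame a b ha h).2 ▸ h, fun h => ?_⟩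
        have ha := ((D b hb).mem a b h).1
        exact ⟨hsub b hb ha, (hcomp b hb a ha).symm ▸ h⟩
      rw [this]
      exact (D b hb).height b (hself b hb)
    guard := fun i z a b hi hza ha ⟨hb, hba⟩ => by
      have hab := (hsame b a hb hba).2
      rw [← hab] at hba ⊢
      exact (D a ha).guard i z a b hi hza (hself a ha) hba }⟩

theorem exists_of_robberMove [DecidableEq V] [NeZero k] {Y : Finset (V ⊕ Fin k)}
    (hC : ∀ a ∈ C, Sum.inl a ∉ Y)
    (hsub : ∀ a ∈ C, {u | RobberMove G Y a u} ⊆ C)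
    (hcov : ∀ a ∈ C, ∃ le peb, IsRegionCover G σ {u | RobberMove G Y a u} r le peb) :
    ∃ le peb, IsRegionCover G σ C r le peb :=
  exists_of_components _ (fun a ha => .refl (hC a ha)) hsub
    (fun _ _ _ hb => Set.ext fun _ => ⟨(RobberMove.trans hb ·), (RobberMove.trans hb.symm ·)⟩)
    (fun a ha b hb hab => .of_adj hab (hC a ha) (hC b hb)) hcov

end IsRegionCover

theorem exists_update_of_card_inter [DecidableEq V] [NeZero k] {σ : Fin k → V ⊕ Fin k}
    (hσ : Injective σ) {Y : Finset (V ⊕ Fin k)} (hY : Y.card = k)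
    (hXY : (univ.image σ ∩ Y).card = k - 1) :
    ∃ i y, σ i ∉ Y ∧ Injective (update σ i y) ∧ univ.image (update σ i y) = Y := by
  set X := univ.image σ
  have hX : X.card = k := by rw [card_image_of_injective _ hσ, card_univ, Fintype.card_fin]
  have hk := NeZero.pos k
  obtain ⟨o, hoX, hoXY⟩ := exists_mem_notMem_of_card_lt_card (s := X ∩ Y) (t := X) (by omega)
  obtain ⟨y, hyY, hyXY⟩ := exists_mem_notMem_of_card_lt_card (s := X ∩ Y) (t := Y) (by omega)
  obtain ⟨i, -, rfl⟩ := mem_image.1 hoX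
  have hoY : σ i ∉ Y := fun h => hoXY (mem_inter.2 ⟨hoX, h⟩)
  have hyX : ∀ j, σ j ≠ y := fun j h =>
    hyXY (mem_inter.2 ⟨h ▸ mem_image_of_mem σ (mem_univ j), hyY⟩)
  have hstay : ∀ j ≠ i, σ j ∈ Y := by
    intro j hj
    have hXY' : X ∩ Y = X.erase (σ i) := eq_of_subset_of_card_le
      (fun z hz => mem_erase.2 ⟨fun h => hoXY (h ▸ hz), (mem_inter.1 hz).1⟩)
      (by rw [card_erase_of_mem hoX, hX, hXY])
    exact (mem_inter.1 (hXY' ▸ mem_erase.2 ⟨hσ.ne hj, mem_image_of_mem σ (mem_univ j)⟩)).2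
  have hinj : Injective (update σ i y) := by
    intro a b h
    simp only [update_apply] at h
    split_ifs at h <;> grind [hσ.eq_iff]
  refine ⟨i, y, hoY, hinj, eq_of_subset_of_card_le ?_ ?_⟩
  · intro z hz
    obtain ⟨j, -, rfl⟩ := mem_image.1 hz
    by_cases hj : j = i
    · rw [hj, update_self]; exact hyY
    · rw [update_of_ne hj]; exact hstay j hj
  · rw [hY, card_image_of_injective _ hinj, card_univ, Fintype.card_fin]

theorem exists_isRegionCover_of_monCopsCatch [Finite V] [DecidableEq V] [NeZero k] :
    ∀ (r : ℕ) (σ : Fin k → V ⊕ Fin k), Injective σ → ∀ v, MonCopsCatch G k r (univ.image σ) v →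
      ∃ le peb, IsRegionCover G σ {u | RobberMove G (univ.image σ) v u} r le peb
  | 0, _, _, _, h => h.elim
  | r + 1, σ, hσ, v, ⟨Y, hY, hXY, hmono, hstep⟩ => by
    obtain ⟨i, y, hiY, hinj, rfl⟩ := exists_update_of_card_inter hσ hY hXY
    set X := univ.image σ
    set σ' := update σ i y
    have hσ'i : σ' i = y := update_self i y σ
    set C := {u | RobberMove G X v u}
    have hXσ : ∀ a ∈ C, ∀ j, σ j ≠ .inl a := fun a ha j h =>
      RobberMove.right_notMem ha (h ▸ mem_image_of_mem σ (mem_univ j))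
    have hvacated : ∀ z a, σ i = .inl z → G.Adj z a → a ∉ C := fun z a hz hza =>
      not_robberMove_of_adj_vacated hmono (hz ▸ mem_image_of_mem σ (mem_univ i)) (hz ▸ hiY) hza
    have hC₀ : ∀ a ∈ {a ∈ C | .inl a ≠ y}, Sum.inl a ∉ univ.image σ' := by
      rintro a ⟨haC, hay⟩ h
      obtain ⟨j, -, hj⟩ := mem_image.1 h
      by_cases hji : j = i
      · subst hji
        exact hay (hσ'i ▸ hj).symm
      · exact hXσ a haC j (update_of_ne hji y σ ▸ hj)
    have hreg : ∀ a ∈ {a ∈ C | .inl a ≠ y}, {u | RobberMove G (univ.image σ') a u} ⊆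
        {a ∈ C | .inl a ≠ y} := fun a ha u hu =>
      ⟨hmono u ((RobberMove.anti inter_subset_left ha.1).trans (hu.anti inter_subset_right)),
        fun h => hu.right_notMem (h ▸ mem_image.2 ⟨i, mem_univ i, hσ'i⟩)⟩
    obtain ⟨le, peb, D⟩ := IsRegionCover.exists_of_robberMove hC₀ hreg fun a ha =>
      exists_isRegionCover_of_monCopsCatch r σ' hinj a
        ((hstep a (RobberMove.anti inter_subset_left ha.1)).resolve_left (hC₀ a ha))
    exact D.exists_of_update hvacated

theorem hasPFC_of_monCopsWinGame [Finite V] [DecidableEq V] [NeZero k] {q : ℕ}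
    (h : MonCopsWinGame G k q) : HasPFC G k q := by
  have hinit : ∀ a : V, Sum.inl a ∉ initPos V k := by simp [initPos]
  obtain ⟨le, peb, D⟩ := IsRegionCover.exists_of_robberMove (C := .univ) (fun a _ => hinit a)
    (fun _ _ => Set.subset_univ _) fun a _ =>
      exists_isRegionCover_of_monCopsCatch q _ Sum.inr_injective a (h a)
  exact ⟨D.toPebbleForestCover⟩

end

theorem monCR_iff_pfc_general (k q : ℕ) (hk : 1 ≤ k) {n : ℕ}
    (G : SimpleGraph (Fin n)) :
    MonCopsWinGame G k q ↔ HasPFC G k q :=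
  have : NeZero k := ⟨by omega⟩
  ⟨hasPFC_of_monCopsWinGame, fun ⟨P⟩ => P.monCopsWinGame⟩

/-- Cops wins the monotone `q`-round `k`-cops-and-robber game on `G` iff `G` admits a
`k`-pebble forest cover of depth at most `q`. -/
theorem monCR_iff_pfc (k q : ℕ) (hk : 1 ≤ k) (hq : 1 ≤ q) {n : ℕ}
    (G : SimpleGraph (Fin n)) :
    MonCopsWinGame G k q ↔ HasPFC G k q :=
  monCR_iff_pfc_general k q hk G
end

section
/- Let k, q ≥ 1 and let φ be a C^k_q-formula. Then for every n ≥ 1 there exists a finite formal ℝ-linear combination F̄ of graphs in L^k_q that models φ for graphs of size n. -/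
set_option maxHeartbeats 1000000

/-!
Homomorphism counts turn the connectives into arithmetic. Products of labelled graphs multiply
hom counts (unless gluing identifies the ends of an edge, in which case one factor vanishes for
every target), and removing label `i` sums hom counts over all positions of label `i`. Hence the
functions that agree with some `hom(F̄, ·)`, `F̄ ∈ ℝL^k_q`, on `n`-vertex graphs form an
`ℝ`-subalgebra, and summing over a label position leads from depth `q` to depth `q + 1`. By
induction on `φ` its truth value lies there: atoms are hom counts of fully labelled graphs with
at most two vertices, the connectives are polynomial, and `∃^{≥t} x_i ψ` is the threshold
`[t ≤ N]` of the number `N ≤ n` of witnesses, which on `{0, …, n}` agrees with an interpolating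
polynomial in `N`.
-/

open Classical

namespace LGraph

variable {k : ℕ}

def IsLHom (F G : LGraph k) (f : F.V → G.V) : Prop :=
  (∀ ⦃u v⦄, F.G.Adj u v → G.G.Adj (f u) (f v)) ∧ ∀ i v, F.ν i = some v → G.ν i = some (f v)

lemma lhomCount_eq_ncard (F G : LGraph k) : lhomCount F G = {f | IsLHom F G f}.ncard := by
  simp only [lhomCount, IsLHom, exists_eq_right']

lemma IsLHom.eq_of_fullyLabelled {F G : LGraph k} (hF : F.FullyLabelled) {f g : F.V → G.V}
    (hf : IsLHom F G f) (hg : IsLHom F G g) : f = g := by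
  funext v
  obtain ⟨i, hi⟩ := hF v
  exact Option.some_injective _ ((hf.2 i v hi).symm.trans (hg.2 i v hi))

lemma lhomCount_of_fullyLabelled {F : LGraph k} (hF : F.FullyLabelled) (G : LGraph k) :
    lhomCount F G = if ∃ f, IsLHom F G f then 1 else 0 := by
  rw [lhomCount_eq_ncard]
  split_ifs with h
  · obtain ⟨f, hf⟩ := h
    exact Set.ncard_eq_one.mpr ⟨f, Set.ext fun g => ⟨fun hg => hg.eq_of_fullyLabelled hF hf,
      fun hg => hg ▸ hf⟩⟩
  · rw [show {f | IsLHom F G f} = ∅ from Set.eq_empty_of_forall_notMem fun f hf => h ⟨f, hf⟩,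
      Set.ncard_empty]

variable (k) in
def empty : LGraph k where
  V := Empty
  fin := inferInstance
  G := ⊥
  ν _ := none

def eqGraph (i j : Fin k) : LGraph k where
  V := Unit
  fin := inferInstance
  G := ⊥
  ν m := if m = i ∨ m = j then some () else none

def edgeGraph (i j : Fin k) : LGraph k where
  V := Bool
  fin := inferInstance
  G := ⊤
  ν m := if m = i then some false else if m = j then some true else none

lemma fullyLabelled_empty : (empty k).FullyLabelled := fun v => v.elim

lemma fullyLabelled_eqGraph (i j : Fin k) : (eqGraph i j).FullyLabelled :=
  fun _ => ⟨i, if_pos (Or.inl rfl)⟩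

lemma fullyLabelled_edgeGraph {i j : Fin k} (hij : i ≠ j) : (edgeGraph i j).FullyLabelled
  | false => ⟨i, if_pos rfl⟩
  | true => ⟨j, by simp [edgeGraph, hij.symm]⟩

lemma lhomCount_empty (G : LGraph k) : lhomCount (empty k) G = 1 := by
  rw [lhomCount_of_fullyLabelled fullyLabelled_empty, if_pos]
  exact ⟨Empty.elim, fun u => u.elim, fun _ u => u.elim⟩

lemma lhomCount_eqGraph {i j : Fin k} {G : LGraph k} {a b : G.V} (ha : G.ν i = some a)
    (hb : G.ν j = some b) : lhomCount (eqGraph i j) G = if a = b then 1 else 0 := by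
  rw [lhomCount_of_fullyLabelled (fullyLabelled_eqGraph i j)]
  congr 1
  refine propext ⟨fun ⟨f, _, hf⟩ => ?_, fun hab => ⟨fun _ => a, fun u v h => h.elim, ?_⟩⟩
  · have hi := hf i () (if_pos (Or.inl rfl))
    have hj := hf j () (if_pos (Or.inr rfl))
    rw [ha] at hi
    rw [hb] at hj
    exact (Option.some_injective _ hi).trans (Option.some_injective _ hj).symm
  · intro m v hm
    by_cases hm' : m = i ∨ m = j
    · rcases hm' with rfl | rfl
      · exact ha
      · exact hb ▸ hab ▸ rfl
    · simp [eqGraph, hm'] at hm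

lemma lhomCount_edgeGraph {i j : Fin k} (hij : i ≠ j) {G : LGraph k} {a b : G.V}
    (ha : G.ν i = some a) (hb : G.ν j = some b) :
    lhomCount (edgeGraph i j) G = if G.G.Adj a b then 1 else 0 := by
  rw [lhomCount_of_fullyLabelled (fullyLabelled_edgeGraph hij)]
  have hνi : (edgeGraph i j).ν i = some false := if_pos rfl
  have hνj : (edgeGraph i j).ν j = some true := by simp [edgeGraph, hij.symm]
  congr 1
  refine propext ⟨fun ⟨f, hadj, hf⟩ => ?_, fun hab => ⟨fun x => cond x b a, ?_, ?_⟩⟩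
  · have hi := hf i false hνi
    have hj := hf j true hνj
    rw [ha, Option.some_inj] at hi
    rw [hb, Option.some_inj] at hj
    exact hi ▸ hj ▸ hadj (by simp [edgeGraph])
  · rintro (_ | _) (_ | _) huv
    · exact absurd huv (SimpleGraph.irrefl _)
    · exact hab
    · exact hab.symm
    · exact absurd huv (SimpleGraph.irrefl _)
  · intro m v hm
    by_cases hmi : m = i
    · subst hmi
      obtain rfl := Option.some_injective _ (hνi.symm.trans hm)
      exact ha
    · by_cases hmj : m = j
      · subst hmj
        obtain rfl := Option.some_injective _ (hνj.symm.trans hm)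
        exact hb
      · simp [edgeGraph, hmi, hmj] at hm

section Product

variable {A B G : LGraph k}

/-- Gluing must not identify the two ends of an edge: the product would suppress the loop, and
hom counts would stop being multiplicative. -/
def LoopFree (A B : LGraph k) : Prop :=
  ∀ x y, sumAdj A B x y → Quot.mk (glue A B) x ≠ Quot.mk (glue A B) y

lemma product_ν_of_left {i : Fin k} {u : A.V} (h : A.ν i = some u) :
    (A.product B).ν i = some (Quot.mk _ (Sum.inl u)) := by
  simp [product, h]

lemma product_ν_of_right {i : Fin k} {v : B.V} (h : B.ν i = some v) :
    (A.product B).ν i = some (Quot.mk _ (Sum.inr v)) := by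
  rcases hA : A.ν i with _ | u
  · simp [product, hA, h]
  · rw [product_ν_of_left hA]
    exact congrArg some (Quot.sound ⟨i, by simp [hA], by simp [h]⟩)

lemma product_ν_eq_some {i : Fin k} {x : (A.product B).V} (h : (A.product B).ν i = some x) :
    (∃ u, A.ν i = some u ∧ Quot.mk _ (Sum.inl u) = x) ∨
      ∃ v, B.ν i = some v ∧ Quot.mk _ (Sum.inr v) = x := by
  rcases hA : A.ν i with _ | u
  · rcases hB : B.ν i with _ | v
    · simp [product, hA, hB] at h
    · exact Or.inr ⟨v, rfl, Option.some_injective _ ((product_ν_of_right hB).symm.trans h)⟩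
  · exact Or.inl ⟨u, rfl, Option.some_injective _ ((product_ν_of_left hA).symm.trans h)⟩

lemma sumElim_eq_of_glue {g : A.V → G.V} {h : B.V → G.V} (hg : IsLHom A G g)
    (hh : IsLHom B G h) {x y : A.V ⊕ B.V} (hxy : glue A B x y) :
    Sum.elim g h x = Sum.elim g h y := by
  obtain ⟨i, hx, hy⟩ := hxy
  obtain ⟨u, hu, rfl⟩ := Option.map_eq_some_iff.mp hx
  obtain ⟨v, hv, rfl⟩ := Option.map_eq_some_iff.mp hy
  exact Option.some_injective _ ((hg.2 i u hu).symm.trans (hh.2 i v hv))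

lemma sumElim_adj_of_sumAdj {g : A.V → G.V} {h : B.V → G.V} (hg : IsLHom A G g)
    (hh : IsLHom B G h) : ∀ {x y : A.V ⊕ B.V}, sumAdj A B x y →
      G.G.Adj (Sum.elim g h x) (Sum.elim g h y)
  | Sum.inl _, Sum.inl _, hxy => hg.1 hxy
  | Sum.inr _, Sum.inr _, hxy => hh.1 hxy

def productLift {g : A.V → G.V} {h : B.V → G.V} (hg : IsLHom A G g) (hh : IsLHom B G h) :
    (A.product B).V → G.V :=
  Quot.lift (Sum.elim g h) fun _ _ => sumElim_eq_of_glue hg hh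

lemma isLHom_productLift {g : A.V → G.V} {h : B.V → G.V} (hg : IsLHom A G g)
    (hh : IsLHom B G h) : IsLHom (A.product B) G (productLift hg hh) := by
  refine ⟨?_, fun i x hx => ?_⟩
  · rintro _ _ ⟨-, x, y, rfl, rfl, hxy⟩
    exact sumElim_adj_of_sumAdj hg hh hxy
  · rcases product_ν_eq_some hx with ⟨u, hu, rfl⟩ | ⟨v, hv, rfl⟩
    · exact hg.2 i u hu
    · exact hh.2 i v hv

lemma loopFree_of_isLHom {g : A.V → G.V} {h : B.V → G.V} (hg : IsLHom A G g)
    (hh : IsLHom B G h) : LoopFree A B := by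
  intro x y hxy hmk
  have hadj : G.G.Adj (productLift hg hh (Quot.mk _ x)) (productLift hg hh (Quot.mk _ y)) :=
    sumElim_adj_of_sumAdj hg hh hxy
  rw [hmk] at hadj
  exact G.G.irrefl hadj

lemma IsLHom.comp_inl (hAB : LoopFree A B) {f : (A.product B).V → G.V}
    (hf : IsLHom (A.product B) G f) : IsLHom A G fun u => f (Quot.mk _ (Sum.inl u)) :=
  ⟨fun u v huv => hf.1 ⟨hAB (Sum.inl u) (Sum.inl v) huv, _, _, rfl, rfl, huv⟩,
    fun i _ hu => hf.2 i _ (product_ν_of_left hu)⟩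

lemma IsLHom.comp_inr (hAB : LoopFree A B) {f : (A.product B).V → G.V}
    (hf : IsLHom (A.product B) G f) : IsLHom B G fun v => f (Quot.mk _ (Sum.inr v)) :=
  ⟨fun u v huv => hf.1 ⟨hAB (Sum.inr u) (Sum.inr v) huv, _, _, rfl, rfl, huv⟩,
    fun i _ hv => hf.2 i _ (product_ν_of_right hv)⟩

lemma lhomCount_product (hAB : LoopFree A B) (G : LGraph k) :
    lhomCount (A.product B) G = lhomCount A G * lhomCount B G := by
  simp only [lhomCount_eq_ncard, ← Nat.card_coe_set_eq, ← Nat.card_prod]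
  refine Nat.card_congr
    { toFun f := (⟨_, f.2.comp_inl hAB⟩, ⟨_, f.2.comp_inr hAB⟩)
      invFun gh := ⟨_, isLHom_productLift gh.1.2 gh.2.2⟩
      left_inv f := by
        refine Subtype.ext (funext fun x => ?_)
        induction x using Quot.ind with
        | mk x => rcases x with _ | _ <;> rfl
      right_inv _ := rfl }

lemma lhomCount_mul_lhomCount (A B G : LGraph k) :
    lhomCount A G * lhomCount B G = if LoopFree A B then lhomCount (A.product B) G else 0 := by
  split_ifs with hAB
  · exact (lhomCount_product hAB G).symm
  · by_contra hne
    obtain ⟨hA, hB⟩ := mul_ne_zero_iff.mp hne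
    rw [lhomCount_eq_ncard] at hA hB
    obtain ⟨g, hg⟩ := Set.nonempty_of_ncard_ne_zero hA
    obtain ⟨h, hh⟩ := Set.nonempty_of_ncard_ne_zero hB
    exact hAB (loopFree_of_isLHom hg hh)

end Product

section Labels

variable {A G : LGraph k} {i : Fin k}

def setLabel (G : LGraph k) (i : Fin k) (v : G.V) : LGraph k :=
  { G with ν := fun j => if j = i then some v else G.ν j }

lemma isLHom_setLabel_iff_of_eq_none (hA : A.ν i = none) {v : G.V} {f : A.V → G.V} :
    IsLHom A (G.setLabel i v) f ↔ IsLHom A G f := by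
  refine and_congr_right fun _ => forall_congr' fun j => forall_congr' fun u => ?_
  by_cases hj : j = i
  · simp [hj, hA]
  · simp [setLabel, hj]

lemma isLHom_removeLabel_iff {u₀ : A.V} (hA : A.ν i = some u₀) {f : A.V → G.V} :
    IsLHom (A.removeLabel i) G f ↔ IsLHom A (G.setLabel i (f u₀)) f := by
  refine and_congr_right fun _ => forall_congr' fun j => ?_
  by_cases hj : j = i
  · subst hj
    simp [removeLabel, setLabel, hA]
  · simp [removeLabel, setLabel, hj]

lemma IsLHom.apply_eq_of_setLabel {u₀ : A.V} (hA : A.ν i = some u₀) {v : G.V}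
    {f : A.V → G.V} (hf : IsLHom A (G.setLabel i v) f) : f u₀ = v :=
  (Option.some_injective _ ((hf.2 i u₀ hA).symm.trans (if_pos rfl))).symm ▸ rfl

lemma lhomCount_setLabel_of_eq_none (hA : A.ν i = none) (v : G.V) :
    lhomCount A (G.setLabel i v) = lhomCount A G := by
  rw [lhomCount_eq_ncard, lhomCount_eq_ncard]
  exact congrArg Set.ncard (Set.ext fun f => isLHom_setLabel_iff_of_eq_none hA)

lemma lhomCount_removeLabel [Fintype G.V] {u₀ : A.V} (hA : A.ν i = some u₀) :
    lhomCount (A.removeLabel i) G = ∑ v, lhomCount A (G.setLabel i v) := by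
  have := A.fin
  have e : {f : A.V → G.V // IsLHom (A.removeLabel i) G f} ≃
      Σ v : G.V, {f : A.V → G.V // IsLHom A (G.setLabel i v) f} :=
    { toFun f := ⟨f.1 u₀, f.1, (isLHom_removeLabel_iff hA).mp f.2⟩
      invFun s := ⟨s.2.1, (isLHom_removeLabel_iff hA).mpr <| by
        rw [s.2.2.apply_eq_of_setLabel hA]; exact s.2.2⟩
      left_inv _ := rfl
      right_inv s := Sigma.subtype_ext (s.2.2.apply_eq_of_setLabel hA) rfl }
  have : ∀ v : G.V, Finite {f : A.V → G.V // IsLHom A (G.setLabel i v) f} :=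
    fun _ => Subtype.finite
  simp only [lhomCount_eq_ncard, ← Nat.card_coe_set_eq]
  exact (Nat.card_congr e).trans Nat.card_sigma

end Labels

def IsConstructible (q : ℕ) (A : LGraph k) : Prop :=
  ∃ t : CT k, t.Valid ∧ t.elimDepth ≤ q ∧ t.graphOf = A

namespace IsConstructible

variable {q : ℕ} {A B : LGraph k}

lemma mono (hA : A.IsConstructible q) {q' : ℕ} (hq : q ≤ q') : A.IsConstructible q' :=
  let ⟨t, ht, hd, hg⟩ := hA
  ⟨t, ht, hd.trans hq, hg⟩

lemma of_fullyLabelled (hA : A.FullyLabelled) : A.IsConstructible q :=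
  ⟨.leaf A, hA, Nat.zero_le q, rfl⟩

lemma product (hA : A.IsConstructible q) (hB : B.IsConstructible q) :
    (A.product B).IsConstructible q := by
  obtain ⟨t, ht, htd, rfl⟩ := hA
  obtain ⟨s, hs, hsd, rfl⟩ := hB
  exact ⟨.prod t s, ⟨ht, hs⟩, max_le htd hsd, rfl⟩

lemma removeLabel (hA : A.IsConstructible q) {i : Fin k} (hi : A.ν i ≠ none) :
    (A.removeLabel i).IsConstructible (q + 1) := by
  obtain ⟨t, ht, htd, rfl⟩ := hA
  exact ⟨.elim i t, ⟨ht, hi⟩, Nat.succ_le_succ htd, rfl⟩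

lemma mem_Lclass (hA : A.IsConstructible q) : A ∈ Lclass k q := by
  obtain ⟨t, ht, htd, rfl⟩ := hA
  exact ⟨t, ht, htd, SimpleGraph.Iso.refl, fun i => Option.map_id'⟩

end IsConstructible

noncomputable def combHom (l : List (ℝ × LGraph k)) (G : LGraph k) : ℝ :=
  (l.map fun p => p.1 * (lhomCount p.2 G : ℝ)).sum

lemma combHom_append (l₁ l₂ : List (ℝ × LGraph k)) (G : LGraph k) :
    combHom (l₁ ++ l₂) G = combHom l₁ G + combHom l₂ G := by
  simp [combHom]

noncomputable def combMul (l₁ l₂ : List (ℝ × LGraph k)) : List (ℝ × LGraph k) :=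
  l₁.flatMap fun p => l₂.map fun r => (if LoopFree p.2 r.2 then p.1 * r.1 else 0, p.2.product r.2)

lemma combHom_combMul (l₁ l₂ : List (ℝ × LGraph k)) (G : LGraph k) :
    combHom (combMul l₁ l₂) G = combHom l₁ G * combHom l₂ G := by
  have hterm : ∀ p r : ℝ × LGraph k,
      (if LoopFree p.2 r.2 then p.1 * r.1 else 0) * lhomCount (p.2.product r.2) G =
        p.1 * lhomCount p.2 G * (r.1 * lhomCount r.2 G) := by
    intro p r
    rw [mul_mul_mul_comm, ← Nat.cast_mul, lhomCount_mul_lhomCount]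
    split_ifs <;> simp
  simp only [combHom, combMul, List.flatMap_def, List.map_flatten, List.sum_flatten, List.map_map,
    Function.comp_def, hterm, List.sum_map_mul_left, List.sum_map_mul_right]

def combElim (n : ℕ) (i : Fin k) (l : List (ℝ × LGraph k)) : List (ℝ × LGraph k) :=
  l.map fun p => if (p.2.ν i).isSome then (p.1, p.2.removeLabel i) else (n * p.1, p.2)

lemma sum_lhomCount_setLabel (A G : LGraph k) [Fintype G.V] (i : Fin k) :
    ∑ v, lhomCount A (G.setLabel i v) =
      if (A.ν i).isSome then lhomCount (A.removeLabel i) G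
      else Fintype.card G.V * lhomCount A G := by
  rcases hA : A.ν i with _ | u₀
  · simp [lhomCount_setLabel_of_eq_none hA]
  · simp [lhomCount_removeLabel hA]

lemma combHom_combElim (i : Fin k) (l : List (ℝ × LGraph k)) (G : LGraph k) [Fintype G.V] :
    combHom (combElim (Fintype.card G.V) i l) G = ∑ v, combHom l (G.setLabel i v) := by
  induction l with
  | nil => simp [combHom, combElim]
  | cons p l ih =>
    simp only [combHom, combElim, List.map_cons, List.sum_cons] at ih ⊢
    rw [ih, Finset.sum_add_distrib, ← Finset.mul_sum, ← Nat.cast_sum, sum_lhomCount_setLabel]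
    split_ifs <;> push_cast <;> ring

end LGraph

namespace LGraph

/-- Functions which, on graphs with `n` vertices, agree with `hom(F̄, ·)` for some
`F̄ ∈ ℝL^k_q`. -/
noncomputable def homSubalgebra (k n q : ℕ) : Subalgebra ℝ (LGraph k → ℝ) where
  carrier := {f | ∃ l : List (ℝ × LGraph k), (∀ p ∈ l, p.2.IsConstructible q) ∧
    ∀ G : LGraph k, Nat.card G.V = n → combHom l G = f G}
  mul_mem' := by
    rintro f g ⟨l₁, hl₁, hf⟩ ⟨l₂, hl₂, hg⟩
    refine ⟨combMul l₁ l₂, fun p hp => ?_,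
      fun G hG => by rw [combHom_combMul, hf G hG, hg G hG]; rfl⟩
    obtain ⟨a, ha, hp⟩ := List.mem_flatMap.mp hp
    obtain ⟨b, hb, rfl⟩ := List.mem_map.mp hp
    exact (hl₁ a ha).product (hl₂ b hb)
  add_mem' := by
    rintro f g ⟨l₁, hl₁, hf⟩ ⟨l₂, hl₂, hg⟩
    refine ⟨l₁ ++ l₂, fun p hp => ?_, fun G hG => by rw [combHom_append, hf G hG, hg G hG]; rfl⟩
    exact (List.mem_append.mp hp).elim (hl₁ p) (hl₂ p)
  algebraMap_mem' c := ⟨[(c, empty k)], by simpa using .of_fullyLabelled fullyLabelled_empty,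
    fun G _ => by simp [combHom, lhomCount_empty]⟩

variable {k n q : ℕ}

lemma homSubalgebra_mono {q' : ℕ} (hq : q ≤ q') : homSubalgebra k n q ≤ homSubalgebra k n q' :=
  fun _ ⟨l, hl, hf⟩ => ⟨l, fun p hp => (hl p hp).mono hq, hf⟩

lemma lhomCount_mem_homSubalgebra {A : LGraph k} (hA : A.IsConstructible q) :
    (fun G => (lhomCount A G : ℝ)) ∈ homSubalgebra k n q :=
  ⟨[(1, A)], by simpa using hA, fun G _ => by simp [combHom]⟩

lemma finsum_setLabel_mem_homSubalgebra {f : LGraph k → ℝ} (hf : f ∈ homSubalgebra k n q)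
    (i : Fin k) : (fun G => ∑ᶠ v : G.V, f (G.setLabel i v)) ∈ homSubalgebra k n (q + 1) := by
  obtain ⟨l, hl, hlf⟩ := hf
  refine ⟨combElim n i l, fun p hp => ?_, fun G hG => ?_⟩
  · obtain ⟨a, ha, rfl⟩ := List.mem_map.mp hp
    by_cases hi : (a.2.ν i).isSome
    · simpa [hi] using (hl a ha).removeLabel (Option.isSome_iff_ne_none.mp hi)
    · simpa [hi] using (hl a ha).mono (Nat.le_succ q)
  · have := G.fin
    have := Fintype.ofFinite G.V
    dsimp only
    rw [finsum_eq_sum_of_fintype, ← hG, Nat.card_eq_fintype_card, combHom_combElim]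
    exact Finset.sum_congr rfl fun v _ => hlf _ hG

end LGraph

open LGraph CForm
open scoped Finset

section Models

variable {k : ℕ}

def Models (n : ℕ) (f : LGraph k → ℝ) (φ : CForm (Fin k)) : Prop :=
  ∀ G : LGraph k, Nat.card G.V = n → (∀ i ∈ freeVars φ, (G.ν i).isSome) →
    f G = if Sat G.G φ G.ν then 1 else 0

variable {n : ℕ}

lemma models_eq (i j : Fin k) :
    Models n (fun G => (lhomCount (eqGraph i j) G : ℝ)) (.eq i j) := by
  intro G _ hfree
  obtain ⟨a, ha⟩ := Option.isSome_iff_exists.mp (hfree i (by simp [freeVars]))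
  obtain ⟨b, hb⟩ := Option.isSome_iff_exists.mp (hfree j (by simp [freeVars]))
  simp [lhomCount_eqGraph ha hb, Sat, ha, hb, eq_comm]

lemma models_adj_self (i : Fin k) : Models n 0 (.adj i i) := by
  rintro G - -
  rw [Pi.zero_apply, if_neg]
  rintro ⟨v, w, hv, hw, hadj⟩
  rw [hv, Option.some_inj] at hw
  exact G.G.irrefl (hw ▸ hadj)

lemma models_adj {i j : Fin k} (hij : i ≠ j) :
    Models n (fun G => (lhomCount (edgeGraph i j) G : ℝ)) (.adj i j) := by
  intro G _ hfree
  obtain ⟨a, ha⟩ := Option.isSome_iff_exists.mp (hfree i (by simp [freeVars]))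
  obtain ⟨b, hb⟩ := Option.isSome_iff_exists.mp (hfree j (by simp [freeVars]))
  simp [lhomCount_edgeGraph hij ha hb, Sat, ha, hb]

lemma Models.not {f : LGraph k → ℝ} {φ : CForm (Fin k)} (h : Models n f φ) :
    Models n (1 - f) φ.not := by
  intro G hG hfree
  simp only [Pi.sub_apply, Pi.one_apply, h G hG hfree, Sat]
  split_ifs <;> simp_all

lemma Models.or {f g : LGraph k → ℝ} {φ ψ : CForm (Fin k)} (hφ : Models n f φ)
    (hψ : Models n g ψ) : Models n (f + g - f * g) (φ.or ψ) := by
  intro G hG hfree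
  simp only [Pi.sub_apply, Pi.add_apply, Pi.mul_apply, Sat,
    hφ G hG fun i hi => hfree i (Finset.mem_union_left _ hi),
    hψ G hG fun i hi => hfree i (Finset.mem_union_right _ hi)]
  split_ifs <;> simp_all

lemma Models.and {f g : LGraph k → ℝ} {φ ψ : CForm (Fin k)} (hφ : Models n f φ)
    (hψ : Models n g ψ) : Models n (f * g) (φ.and ψ) := by
  intro G hG hfree
  simp only [Pi.mul_apply, Sat,
    hφ G hG fun i hi => hfree i (Finset.mem_union_left _ hi),
    hψ G hG fun i hi => hfree i (Finset.mem_union_right _ hi)]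
  split_ifs <;> simp_all

lemma sat_count_iff {V : Type*} [Fintype V] (G : SimpleGraph V) (t : ℕ) (i : Fin k)
    (ψ : CForm (Fin k)) (a : Fin k → Option V) :
    Sat G (.count t i ψ) a ↔
      t ≤ #{v | Sat G ψ fun j => if j = i then some v else a j} := by
  refine ⟨fun ⟨s, hts, hs⟩ => hts.trans (Finset.card_le_card fun v hv => ?_),
    fun ht => ⟨_, ht, fun v hv => (Finset.mem_filter.mp hv).2⟩⟩
  exact Finset.mem_filter.mpr ⟨Finset.mem_univ v, hs v hv⟩

lemma exists_eval_eq_threshold (n t : ℕ) :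
    ∃ p : Polynomial ℝ, ∀ m ≤ n, p.eval (m : ℝ) = if t ≤ m then 1 else 0 := by
  have hinj : Set.InjOn (fun m : ℕ => (m : ℝ)) (Finset.range (n + 1)) :=
    fun _ _ _ _ h => Nat.cast_injective h
  exact ⟨Lagrange.interpolate _ _ (fun m => if t ≤ m then 1 else 0), fun m hm =>
    Lagrange.eval_interpolate_at_node _ hinj (Finset.mem_range_succ_iff.mpr hm)⟩

lemma Models.count {f : LGraph k → ℝ} {ψ : CForm (Fin k)} (h : Models n f ψ) (t : ℕ)
    (i : Fin k) {p : Polynomial ℝ} (hp : ∀ m ≤ n, p.eval (m : ℝ) = if t ≤ m then 1 else 0) :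
    Models n (Polynomial.aeval (fun G => ∑ᶠ v : G.V, f (G.setLabel i v)) p) (.count t i ψ) := by
  intro G hG hfree
  have := G.fin
  have := Fintype.ofFinite G.V
  have hfree' (v : G.V) : ∀ j ∈ freeVars ψ, ((G.setLabel i v).ν j).isSome := by
    intro j hj
    by_cases hji : j = i
    · simp [setLabel, hji]
    · simpa [setLabel, hji] using hfree j (Finset.mem_erase.mpr ⟨hji, hj⟩)
  set N := #{v | Sat G.G ψ fun j => if j = i then some v else G.ν j}
  have hN : ∑ᶠ v : G.V, f (G.setLabel i v) = N := by
    rw [finsum_eq_sum_of_fintype, ← Finset.sum_boole]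
    exact Finset.sum_congr rfl fun v _ => h _ hG (hfree' v)
  have hNn : N ≤ n := by
    rw [← hG, Nat.card_eq_fintype_card]
    exact Finset.card_filter_le _ _
  rw [Polynomial.aeval_pi_apply₂, Polynomial.coe_aeval_eq_eval, hN, hp N hNn]
  simp only [sat_count_iff, N]

end Models

lemma exists_mem_homSubalgebra_models {k : ℕ} (n : ℕ) (φ : CForm (Fin k)) :
    ∃ f ∈ homSubalgebra k n (qr φ), Models n f φ := by
  induction φ with
  | eq i j =>
    exact ⟨_, lhomCount_mem_homSubalgebra (.of_fullyLabelled (fullyLabelled_eqGraph i j)),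
      models_eq i j⟩
  | adj i j =>
    by_cases hij : i = j
    · subst hij
      exact ⟨0, zero_mem _, models_adj_self i⟩
    · exact ⟨_, lhomCount_mem_homSubalgebra (.of_fullyLabelled (fullyLabelled_edgeGraph hij)),
        models_adj hij⟩
  | not φ ih =>
    obtain ⟨f, hf, hφ⟩ := ih
    exact ⟨1 - f, sub_mem (one_mem _) hf, hφ.not⟩
  | or φ ψ ihφ ihψ =>
    obtain ⟨f, hf, hφ⟩ := ihφ
    obtain ⟨g, hg, hψ⟩ := ihψ
    have hf' := homSubalgebra_mono (le_max_left (qr φ) (qr ψ)) hf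
    have hg' := homSubalgebra_mono (le_max_right (qr φ) (qr ψ)) hg
    exact ⟨f + g - f * g, sub_mem (add_mem hf' hg') (mul_mem hf' hg'), hφ.or hψ⟩
  | and φ ψ ihφ ihψ =>
    obtain ⟨f, hf, hφ⟩ := ihφ
    obtain ⟨g, hg, hψ⟩ := ihψ
    exact ⟨f * g, mul_mem (homSubalgebra_mono (le_max_left _ _) hf)
      (homSubalgebra_mono (le_max_right _ _) hg), hφ.and hψ⟩
  | count t i ψ ih =>
    obtain ⟨f, hf, hψ⟩ := ih
    obtain ⟨p, hp⟩ := exists_eval_eq_threshold n t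
    exact ⟨_, Algebra.adjoin_le (Set.singleton_subset_iff.mpr
      (finsum_setLabel_mem_homSubalgebra hf i)) (Polynomial.aeval_mem_adjoin_singleton ℝ _),
      hψ.count t i hp⟩

theorem qg_from_ckq_general (k q : ℕ) (φ : CForm (Fin k))
    (hφ : CForm.qr φ ≤ q) (n : ℕ) :
    ∃ l : List (ℝ × LGraph k), (∀ p ∈ l, p.2 ∈ Lclass k q) ∧
      ∀ G : LGraph k, Nat.card G.V = n → (∀ i ∈ CForm.freeVars φ, (G.ν i).isSome) →
        ((CForm.Sat G.G φ G.ν →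
            (l.map fun p => p.1 * (LGraph.lhomCount p.2 G : ℝ)).sum = 1) ∧
          (¬ CForm.Sat G.G φ G.ν →
            (l.map fun p => p.1 * (LGraph.lhomCount p.2 G : ℝ)).sum = 0)) := by
  obtain ⟨f, ⟨l, hl, hlf⟩, hf⟩ := exists_mem_homSubalgebra_models n φ
  refine ⟨l, fun p hp => ((hl p hp).mono hφ).mem_Lclass, fun G hG hfree => ?_⟩
  have hval : combHom l G = if Sat G.G φ G.ν then 1 else 0 := (hlf G hG).trans (hf G hG hfree)
  exact ⟨fun hs => by simpa [hs, combHom] using hval, fun hs => by simpa [hs, combHom] using hval⟩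

/-- For every `C^k_q`-formula `φ` and `n ≥ 1` there is an `ℝ`-linear combination of
graphs in `L^k_q` modelling `φ` for graphs of size `n`. -/
theorem qg_from_ckq (k q : ℕ) (hk : 1 ≤ k) (hq : 1 ≤ q) (φ : CForm (Fin k))
    (hφ : CForm.qr φ ≤ q) (n : ℕ) (hn : 1 ≤ n) :
    ∃ l : List (ℝ × LGraph k), (∀ p ∈ l, p.2 ∈ Lclass k q) ∧
      ∀ G : LGraph k, Nat.card G.V = n → (∀ i ∈ CForm.freeVars φ, (G.ν i).isSome) →
        ((CForm.Sat G.G φ G.ν →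
            (l.map fun p => p.1 * (LGraph.lhomCount p.2 G : ℝ)).sum = 1) ∧
          (¬ CForm.Sat G.G φ G.ν →
            (l.map fun p => p.1 * (LGraph.lhomCount p.2 G : ℝ)).sum = 0)) :=
  qg_from_ckq_general k q φ hφ n
end

section
/- Let k ≥ 1, q ≥ 0, and let G be a connected finite simple graph. If Robber has a winning strategy in the non-monotone q-round k-cops-and-robber game CR^k_q(G), then the graphs G_0 and G_1 are homomorphism indistinguishable over T^k_q. -/
set_option maxHeartbeats 1000000

/-!
A homomorphism `φ : F → G_∅` lies over `π = fst ∘ φ : F → G`. If mod-2 edge vectors `t_w`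
(`w ∈ F`) of `G` have boundary `1_U` at `π w` and agree on the edge `π u π w` whenever `uw ∈ F`,
then replacing each `φ w = (π w, S)` by `(π w, S ∆ t_w)` is a bijection
`Hom(F, G_∅) ≃ Hom(F, G_U)` over `π`.

Such vectors come from Robber's winning strategy. Cops walk down a pebble forest cover of `F`,
putting a cop on `π w` at each vertex `w` and keeping cops on the images of the ancestors that
still have neighbours below `w`; by the pebbling condition there are at most `k - 1` of these.
`t_w` is a fixed chain with boundary `1_U + 1_r₀` plus the robber's walk so far, so its boundary
is `1_U + 1_r` with the robber at `r ≠ π w`. Since the robber never crosses a guarded image, the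
vectors of adjacent vertices of `F` agree near those images.
-/
namespace SimpleGraph

variable {V : Type*} [DecidableEq V] {G : SimpleGraph V}

def Walk.edgeParity {a b : V} (p : G.Walk a b) : Sym2 V → ZMod 2 := fun e => p.edges.count e

namespace Walk

@[simp]
lemma edgeParity_nil {a : V} : (nil : G.Walk a a).edgeParity = 0 := by
  ext; simp [edgeParity]

lemma edgeParity_cons {a c b : V} (h : G.Adj a c) (p : G.Walk c b) :
    (cons h p).edgeParity = Pi.single s(a, c) 1 + p.edgeParity := by
  ext e
  by_cases he : e = s(a, c)
  · subst he; simp [edgeParity, add_comm]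
  · simp [edgeParity, he, Ne.symm he]

lemma edgeParity_eq_zero {a b v : V} (p : G.Walk a b) (hv : v ∉ p.support) {e : Sym2 V}
    (he : v ∈ e) : p.edgeParity e = 0 := by
  obtain ⟨w, rfl⟩ := Sym2.mem_iff_exists.1 he
  have : s(v, w) ∉ p.edges := fun h => hv (p.fst_mem_support_of_mem_edges h)
  simp [edgeParity, List.count_eq_zero_of_not_mem this]

end Walk

variable [Fintype V] (G) [DecidableRel G.Adj]

def boundary : (Sym2 V → ZMod 2) →+ (V → ZMod 2) where
  toFun t v := ∑ e ∈ G.incidenceFinset v, t e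
  map_zero' := by ext; simp
  map_add' t t' := by ext; simp [Finset.sum_add_distrib]

lemma boundary_apply (t : Sym2 V → ZMod 2) (v : V) :
    G.boundary t v = ∑ e ∈ G.incidenceFinset v, t e := rfl

lemma boundary_single_edge {a b : V} (hab : G.Adj a b) :
    G.boundary (Pi.single s(a, b) 1) = Pi.single a 1 + Pi.single b 1 := by
  ext v
  simp only [boundary_apply, Finset.sum_pi_single', mem_incidenceFinset, incidenceSet,
    Set.mem_ofPred_eq, mem_edgeSet, hab, true_and, Sym2.mem_iff]
  by_cases hva : v = a
  · subst hva
    simp [hab.ne]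
  · by_cases hvb : v = b
    · subst hvb
      simp [hva]
    · simp [hva, hvb]

lemma even_ncard_incidence_iff (t : Sym2 V → ZMod 2) (v : V) :
    Even {e | e ∈ G.incidenceSet v ∧ t e = 1}.ncard ↔ G.boundary t v = 0 := by
  have hset : {e | e ∈ G.incidenceSet v ∧ t e = 1} = ↑{e ∈ G.incidenceFinset v | t e = 1} := by
    ext e; simp
  have hbool : ∀ x : ZMod 2, x = if x = 1 then 1 else 0 := by decide
  rw [hset, Set.ncard_coe_finset, ← ZMod.natCast_eq_zero_iff_even, ← Finset.sum_boole,
    boundary_apply]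
  exact Iff.of_eq (congrArg (· = 0) (Finset.sum_congr rfl fun e _ => (hbool (t e)).symm))

variable {G}

lemma Walk.boundary_edgeParity {a b : V} (p : G.Walk a b) :
    G.boundary p.edgeParity = Pi.single a 1 + Pi.single b 1 := by
  induction p with
  | nil =>
    rw [edgeParity_nil, map_zero]
    ext v
    simp only [Pi.add_apply, Pi.zero_apply, CharTwo.add_self_eq_zero]
  | cons h p ih =>
    rw [edgeParity_cons, map_add, boundary_single_edge G h, ih]
    ext v
    have h2 : ∀ x y z : ZMod 2, x + y + (y + z) = x + z := by decide
    exact h2 _ _ _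

lemma Connected.exists_boundary_eq (hG : G.Connected) {U : Set V} (hU : Odd U.ncard) (r : V) :
    ∃ t, G.boundary t = U.indicator 1 + Pi.single r 1 := by
  classical
  have p : ∀ u, G.Walk u r := fun u => (hG.preconnected u r).some
  refine ⟨∑ u ∈ U.toFinset, (p u).edgeParity, ?_⟩
  ext v
  simp only [map_sum, Walk.boundary_edgeParity, Finset.sum_add_distrib, Finset.sum_apply,
    Pi.add_apply, Finset.sum_pi_single, Finset.sum_const, Set.mem_toFinset]
  rw [← Set.ncard_eq_toFinset_card', nsmul_eq_mul, ZMod.natCast_eq_one_iff_odd.2 hU, one_mul,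
    Set.indicator_apply, Pi.one_apply]

end SimpleGraph

lemma Set.even_ncard_symmDiff {α : Type*} [Finite α] (S T : Set α) :
    Even (symmDiff S T).ncard ↔ (Even S.ncard ↔ Even T.ncard) := by
  have hunion := Set.ncard_union_add_ncard_inter S T
  have hdiff := Set.ncard_sdiff_add_ncard_of_subset (s := S ∩ T) (t := S ∪ T) inf_le_sup
  rw [show symmDiff S T = (S ∪ T) \ (S ∩ T) from symmDiff_eq_sup_sdiff_inf S T]
  simp only [Nat.even_iff]
  omega

lemma Set.indicator_add_indicator_eq_zero_iff {α : Type*} {U₁ U₂ : Set α} (v : α) :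
    (U₁.indicator 1 v + U₂.indicator 1 v : ZMod 2) = 0 ↔ (v ∈ U₁ ↔ v ∈ U₂) := by
  by_cases h₁ : v ∈ U₁ <;> by_cases h₂ : v ∈ U₂ <;>
    simp [h₁, h₂, show (1 : ZMod 2) + 1 = 0 from rfl]

section Twist

variable {V : Type*} [Fintype V] [DecidableEq V] {G : SimpleGraph V} [DecidableRel G.Adj]
  {U₁ U₂ : Set V}

namespace CFIvert

def twist (x : CFIvert G U₁) (t : Sym2 V → ZMod 2)
    (ht : G.boundary t x.1.1 = U₁.indicator 1 x.1.1 + U₂.indicator 1 x.1.1) : CFIvert G U₂ :=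
  ⟨(x.1.1, symmDiff x.1.2 {e | e ∈ G.incidenceSet x.1.1 ∧ t e = 1}), by
    refine ⟨symmDiff_le_sup.trans (sup_le x.2.1 fun e he => he.1), ?_⟩
    rw [Set.even_ncard_symmDiff, x.2.2, G.even_ncard_incidence_iff, ht,
      Set.indicator_add_indicator_eq_zero_iff]
    tauto⟩

lemma twist_twist (x : CFIvert G U₁) (t : Sym2 V → ZMod 2)
    (ht : G.boundary t x.1.1 = U₁.indicator 1 x.1.1 + U₂.indicator 1 x.1.1)
    (ht' : G.boundary t x.1.1 = U₂.indicator 1 x.1.1 + U₁.indicator 1 x.1.1) :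
    (x.twist t ht).twist t ht' = x :=
  Subtype.ext (Prod.ext rfl (symmDiff_symmDiff_cancel_right _ _))

lemma adj_twist {x y : CFIvert G U₁} (hxy : (CFI G U₁).Adj x y) {t t' : Sym2 V → ZMod 2}
    (ht : G.boundary t x.1.1 = U₁.indicator 1 x.1.1 + U₂.indicator 1 x.1.1)
    (ht' : G.boundary t' y.1.1 = U₁.indicator 1 y.1.1 + U₂.indicator 1 y.1.1)
    (htt' : t s(x.1.1, y.1.1) = t' s(x.1.1, y.1.1)) :
    (CFI G U₂).Adj (x.twist t ht) (y.twist t' ht') := by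
  obtain ⟨hadj, hxy⟩ := hxy
  refine ⟨hadj, ?_⟩
  have hx : s(x.1.1, y.1.1) ∈ G.incidenceSet x.1.1 := ⟨hadj, Sym2.mem_mk_left _ _⟩
  have hy : s(x.1.1, y.1.1) ∈ G.incidenceSet y.1.1 := ⟨hadj, Sym2.mem_mk_right _ _⟩
  simp only [twist, Set.mem_symmDiff, Set.mem_ofPred_eq] at hxy ⊢
  simp only [hx, hy, true_and, htt']
  tauto

variable {W : Type*} (T : (W → V) → W → Sym2 V → ZMod 2)

def twistAll
    (hT : ∀ π w, G.boundary (T π w) (π w) = U₁.indicator 1 (π w) + U₂.indicator 1 (π w))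
    (φ : W → CFIvert G U₁) : W → CFIvert G U₂ :=
  fun w => (φ w).twist (T (fun u => (φ u).1.1) w) (hT (fun u => (φ u).1.1) w)

lemma twistAll_twistAll
    (hT : ∀ π w, G.boundary (T π w) (π w) = U₁.indicator 1 (π w) + U₂.indicator 1 (π w))
    (hT' : ∀ π w, G.boundary (T π w) (π w) = U₂.indicator 1 (π w) + U₁.indicator 1 (π w))
    (φ : W → CFIvert G U₁) : twistAll T hT' (twistAll T hT φ) = φ :=
  funext fun w => twist_twist _ _ (hT (fun u => (φ u).1.1) w) (hT' (fun u => (φ u).1.1) w)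

lemma twistAll_adj {F : SimpleGraph W}
    (hT : ∀ π w, G.boundary (T π w) (π w) = U₁.indicator 1 (π w) + U₂.indicator 1 (π w))
    (hagree : ∀ π u w, F.Adj u w → T π u s(π u, π w) = T π w s(π u, π w))
    {φ : W → CFIvert G U₁} (hφ : ∀ ⦃u w⦄, F.Adj u w → (CFI G U₁).Adj (φ u) (φ w))
    ⦃u w : W⦄ (huw : F.Adj u w) : (CFI G U₂).Adj (twistAll T hT φ u) (twistAll T hT φ w) :=
  adj_twist (hφ huw) _ _ (hagree _ u w huw)

end CFIvert

theorem homCount_CFI_eq_of_twist {W : Type*} (F : SimpleGraph W) (U₁ U₂ : Set V)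
    (T : (W → V) → W → Sym2 V → ZMod 2)
    (hT : ∀ π w, G.boundary (T π w) (π w) = U₁.indicator 1 (π w) + U₂.indicator 1 (π w))
    (hagree : ∀ π u w, F.Adj u w → T π u s(π u, π w) = T π w s(π u, π w)) :
    homCount F (CFI G U₁) = homCount F (CFI G U₂) := by
  have hT' : ∀ π w, G.boundary (T π w) (π w) = U₂.indicator 1 (π w) + U₁.indicator 1 (π w) :=
    fun π w => (hT π w).trans (add_comm _ _)
  unfold homCount
  rw [← Nat.card_coe_set_eq, ← Nat.card_coe_set_eq]
  exact Nat.card_congr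
    { toFun := fun φ => ⟨CFIvert.twistAll T hT φ.1, CFIvert.twistAll_adj T hT hagree φ.2⟩
      invFun := fun ψ => ⟨CFIvert.twistAll T hT' ψ.1, CFIvert.twistAll_adj T hT' hagree ψ.2⟩
      left_inv := fun φ => Subtype.ext (CFIvert.twistAll_twistAll T hT hT' φ.1)
      right_inv := fun ψ => Subtype.ext (CFIvert.twistAll_twistAll T hT' hT ψ.1) }

end Twist

section Game

variable {V : Type*} [DecidableEq V] {G : SimpleGraph V} {k : ℕ}

lemma RobberEsc.of_succ :
    ∀ {n : ℕ} {X : Finset (V ⊕ Fin k)} {r : V}, RobberEsc G k (n + 1) X r → RobberEsc G k n X r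
  | 0, _, _, _ => trivial
  | _ + 1, _, _, h => fun Y hY hXY =>
    let ⟨u, hmove, hu, hesc⟩ := h Y hY hXY
    ⟨u, hmove, hu, hesc.of_succ⟩

/-- The cop guarding no vertex of `P` moves to `v`, unless `v` is already occupied. -/
lemma RobberEsc.exists_escape {n : ℕ} {X : Finset (V ⊕ Fin k)} {r : V}
    (hesc : RobberEsc G k (n + 1) X r) (hr : Sum.inl r ∉ X) (hX : X.card = k) (v : V)
    (P : Finset V) (hP : P.card < k) (hPX : ∀ x ∈ P, Sum.inl x ∈ X) :
    ∃ (Y : Finset (V ⊕ Fin k)) (r' : V) (p : G.Walk r r'),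
      RobberEsc G k n Y r' ∧ Sum.inl r' ∉ Y ∧ Y.card = k ∧ Sum.inl v ∈ Y ∧
      (∀ x ∈ P, Sum.inl x ∈ Y) ∧ ∀ x ∈ P, x ∉ p.support := by
  by_cases hv : Sum.inl v ∈ X
  · refine ⟨X, r, .nil, hesc.of_succ, hr, hX, hv, hPX, fun x hx hxr => ?_⟩
    rw [SimpleGraph.Walk.support_nil, List.mem_singleton] at hxr
    exact hr (hxr ▸ hPX x hx)
  obtain ⟨z, hzX, hzP⟩ : ∃ z ∈ X, z ∉ P.image Sum.inl :=
    Finset.exists_mem_notMem_of_card_lt_card ((Finset.card_image_le).trans_lt (hX.symm ▸ hP))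
  set Y := insert (Sum.inl v) (X.erase z)
  have hXY : X ∩ Y = X.erase z := by
    ext x
    simp only [Y, Finset.mem_inter, Finset.mem_insert, Finset.mem_erase]
    constructor
    · rintro ⟨hxX, rfl | hx⟩
      · exact absurd hxX hv
      · exact hx
    · exact fun hx => ⟨hx.2, Or.inr hx⟩
  have hPY : ∀ x ∈ P, Sum.inl x ∈ X.erase z := fun x hx =>
    Finset.mem_erase.2 ⟨fun hxz => hzP (hxz ▸ Finset.mem_image_of_mem _ hx), hPX x hx⟩
  have hYcard : Y.card = k := by
    rw [Finset.card_insert_of_notMem fun h => hv (Finset.mem_of_mem_erase h),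
      Finset.card_erase_of_mem hzX, hX]
    exact Nat.sub_add_cancel (Finset.card_pos.2 ⟨z, hzX⟩ |>.trans_eq hX)
  obtain ⟨r', ⟨p, hp⟩, hr', hesc'⟩ :=
    hesc Y hYcard (by rw [hXY, Finset.card_erase_of_mem hzX, hX])
  refine ⟨Y, r', p, hesc', hr', hYcard, Finset.mem_insert_self _ _,
    fun x hx => Finset.mem_insert_of_mem (hPY x hx), fun x hx hxp => hp x hxp ?_⟩
  rw [hXY]
  exact hPY x hx

variable [Fintype V] (G) (k) [DecidableRel G.Adj]

/-- The edge vector `t` moves the parity defect of `U` to the robber's vertex `r`. -/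
def RobberState (U : Set V) (n : ℕ) (X : Finset (V ⊕ Fin k)) (r : V) (t : Sym2 V → ZMod 2) :
    Prop :=
  RobberEsc G k n X r ∧ Sum.inl r ∉ X ∧ X.card = k ∧ G.boundary t = U.indicator 1 + Pi.single r 1

variable {G k}

lemma exists_robberState_initPos (hG : G.Connected) {U : Set V} (hU : Odd U.ncard) {q : ℕ}
    (hrob : RobberWinsGame G k q) : ∃ r t, RobberState G k U q (initPos V k) r t := by
  obtain ⟨r, hr⟩ := hrob
  obtain ⟨t, ht⟩ := hG.exists_boundary_eq hU r
  refine ⟨r, t, hr, by simp [initPos], ?_, ht⟩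
  simp [initPos, Finset.card_image_of_injective _ Sum.inr_injective]

lemma RobberState.exists_next {U : Set V} {n : ℕ} {X : Finset (V ⊕ Fin k)} {r : V}
    {t : Sym2 V → ZMod 2} (hs : RobberState G k U (n + 1) X r t) (v : V) (P : Finset V)
    (hP : P.card < k) (hPX : ∀ x ∈ P, Sum.inl x ∈ X) :
    ∃ Y r' t', RobberState G k U n Y r' t' ∧ Sum.inl v ∈ Y ∧ (∀ x ∈ P, Sum.inl x ∈ Y) ∧
      ∀ x ∈ P, ∀ e, x ∈ e → t' e = t e := by
  obtain ⟨hesc, hr, hX, ht⟩ := hs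
  obtain ⟨Y, r', p, hesc', hr', hY, hvY, hPY, hPp⟩ := hesc.exists_escape hr hX v P hP hPX
  refine ⟨Y, r', t + p.edgeParity, ⟨hesc', hr', hY, ?_⟩, hvY, hPY, fun x hx e hxe => ?_⟩
  · rw [map_add, ht, p.boundary_edgeParity]
    ext w
    have h2 : ∀ x y z : ZMod 2, x + y + (y + z) = x + z := by decide
    exact h2 _ _ _
  · rw [Pi.add_apply, p.edgeParity_eq_zero (hPp x hx) hxe, add_zero]

end Game

namespace PebbleForestCover

section

variable {W : Type*} {F : SimpleGraph W} {k q : ℕ} (c : PebbleForestCover F k q)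

noncomputable def depth (a : W) : ℕ := {u | c.le u a}.ncard

/-- While the game is at `a`, the images of the vertices open at `a` must stay occupied. -/
def IsOpenAt (f a : W) : Prop := c.le f a ∧ ∃ e, F.Adj f e ∧ c.le a e

variable {c}

lemma IsOpenAt.of_le {f a g : W} (h : c.IsOpenAt f g) (hfa : c.le f a) (hag : c.le a g) :
    c.IsOpenAt f a :=
  ⟨hfa, h.2.imp fun _ he => ⟨he.1, c.le_trans a g _ hag he.2⟩⟩

lemma IsOpenAt.peb_ne {f g a : W} (hf : c.IsOpenAt f a) (hfg : c.le f g) (hga : c.le g a)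
    (hne : f ≠ g) : c.peb f ≠ c.peb g :=
  let ⟨hfa, e, hfe, hae⟩ := hf
  c.pebbleCond hfe (c.le_trans f a e hfa hae) hfg (c.le_trans g a e hga hae) hne

variable (c)

open scoped Classical in
lemma card_isOpenAt_lt [Fintype W] (a : W) :
    (Finset.univ.filter fun f => c.IsOpenAt f a ∧ f ≠ a).card < k := by
  have hmaps : Set.MapsTo c.peb (Finset.univ.filter fun f => c.IsOpenAt f a ∧ f ≠ a)
      (Finset.univ.erase (c.peb a)) := fun f hf => by
    obtain ⟨hfa, hne⟩ := (Finset.mem_filter.1 hf).2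
    exact Finset.mem_erase.2 ⟨hfa.peb_ne hfa.1 (c.le_refl a) hne, Finset.mem_univ _⟩
  have hinj : Set.InjOn c.peb (Finset.univ.filter fun f => c.IsOpenAt f a ∧ f ≠ a) := by
    intro f₁ hf₁ f₂ hf₂ hpeb
    obtain ⟨hf₁a, -⟩ := (Finset.mem_filter.1 hf₁).2
    obtain ⟨hf₂a, -⟩ := (Finset.mem_filter.1 hf₂).2
    by_contra hne
    rcases c.downChain f₁ f₂ a hf₁a.1 hf₂a.1 with h₁₂ | h₂₁
    · exact hf₁a.peb_ne h₁₂ hf₂a.1 hne hpeb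
    · exact hf₂a.peb_ne h₂₁ hf₁a.1 (Ne.symm hne) hpeb.symm
  calc _ ≤ (Finset.univ.erase (c.peb a)).card := Finset.card_le_card_of_injOn _ hmaps hinj
    _ < k := by
      rw [Finset.card_erase_of_mem (Finset.mem_univ _), Finset.card_univ, Fintype.card_fin]
      exact Nat.sub_lt (c.peb a).pos one_pos

lemma depth_eq_one {g : W} (h : ∀ a, c.le a g → a = g) : c.depth g = 1 := by
  rw [depth, show {u | c.le u g} = {g} from
    Set.ext fun u => ⟨h u, fun hu => hu ▸ c.le_refl u⟩, Set.ncard_singleton]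

variable [Finite W]

lemma depth_pos (a : W) : 0 < c.depth a :=
  (Set.ncard_pos (Set.toFinite _)).2 ⟨a, c.le_refl a⟩

lemma depth_le_depth {a b : W} (hab : c.le a b) : c.depth a ≤ c.depth b :=
  Set.ncard_le_ncard (fun _ hu => c.le_trans _ a b hu hab)

lemma depth_lt_depth {a b : W} (hab : c.le a b) (hne : a ≠ b) : c.depth a < c.depth b :=
  Set.ncard_lt_ncard ⟨fun _ hu => c.le_trans _ a b hu hab,
    fun h => hne (c.le_antisymm a b hab (h (c.le_refl b)))⟩

lemma exists_parent {g : W} (h : ∃ a, c.le a g ∧ a ≠ g) :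
    ∃ p, c.le p g ∧ p ≠ g ∧ (∀ a, c.le a g → a ≠ g → c.le a p) ∧ c.depth g = c.depth p + 1 := by
  obtain ⟨p, ⟨hpg, hpne⟩, hmax⟩ :=
    Set.exists_max_image {a | c.le a g ∧ a ≠ g} c.depth (Set.toFinite _) h
  have hbelow : ∀ a, c.le a g → a ≠ g → c.le a p := by
    intro a hag hane
    rcases c.downChain a p g hag hpg with hap | hpa
    · exact hap
    · rcases eq_or_ne p a with rfl | hpa'
      · exact c.le_refl p
      · exact absurd (hmax a ⟨hag, hane⟩) (not_le.2 (c.depth_lt_depth hpa hpa'))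
  refine ⟨p, hpg, hpne, hbelow, ?_⟩
  have hset : {u | c.le u g} = insert g {u | c.le u p} := by
    ext u
    refine ⟨fun hug => (eq_or_ne u g).imp_right (hbelow u hug), ?_⟩
    rintro (rfl | hup)
    exacts [c.le_refl u, c.le_trans u p g hup hpg]
  have hg : g ∉ {u | c.le u p} := fun hgp => hpne (c.le_antisymm p g hpg hgp)
  rw [depth, hset, Set.ncard_insert_of_notMem hg]
  rfl

end

section

variable {V : Type*} [Fintype V] [DecidableEq V] (G : SimpleGraph V) [DecidableRel G.Adj]
  (U : Set V) {W : Type*} {F : SimpleGraph W} {k q : ℕ} (c : PebbleForestCover F k q)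
  (π : W → V)

def IsPositionAt (a : W) (X : Finset (V ⊕ Fin k)) (r : V) (t : Sym2 V → ZMod 2) : Prop :=
  RobberState G k U (q - c.depth a) X r t ∧ Sum.inl (π a) ∈ X ∧
    ∀ f, c.IsOpenAt f a → Sum.inl (π f) ∈ X

variable {G U} [Fintype W]

lemma exists_isPositionAt (g : W) {X : Finset (V ⊕ Fin k)} {r : V} {t : Sym2 V → ZMod 2}
    (hs : RobberState G k U (q - c.depth g + 1) X r t)
    (hX : ∀ f, c.IsOpenAt f g → f ≠ g → Sum.inl (π f) ∈ X) :
    ∃ Y r' t', c.IsPositionAt G U π g Y r' t' ∧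
      ∀ f, c.IsOpenAt f g → f ≠ g → ∀ e, π f ∈ e → t' e = t e := by
  classical
  set P := (Finset.univ.filter fun f => c.IsOpenAt f g ∧ f ≠ g).image π
  have hmem : ∀ f, c.IsOpenAt f g → f ≠ g → π f ∈ P := fun f hf hne =>
    Finset.mem_image_of_mem π (Finset.mem_filter.2 ⟨Finset.mem_univ f, hf, hne⟩)
  have hPX : ∀ x ∈ P, Sum.inl x ∈ X := by
    simp only [P, Finset.forall_mem_image, Finset.mem_filter, Finset.mem_univ, true_and]
    exact fun f hf => hX f hf.1 hf.2
  obtain ⟨Y, r', t', hs', hgY, hPY, hagree⟩ :=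
    hs.exists_next (π g) P (Finset.card_image_le.trans_lt (c.card_isOpenAt_lt g)) hPX
  refine ⟨Y, r', t', ⟨hs', hgY, fun f hf => ?_⟩, fun f hf hne => hagree _ (hmem f hf hne)⟩
  rcases eq_or_ne f g with rfl | hne
  exacts [hgY, hPY _ (hmem f hf hne)]

variable {π}

lemma exists_isPositionAt_of_depth_eq_succ
    (hinit : ∃ r t, RobberState G k U q (initPos V k) r t) {N : ℕ} {X : W → Finset (V ⊕ Fin k)}
    {r : W → V} {t : W → Sym2 V → ZMod 2}
    (hpos : ∀ a, c.depth a ≤ N → c.IsPositionAt G U π a (X a) (r a) (t a))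
    (hagree : ∀ a b, c.le a b → c.depth b ≤ N →
      ∀ f, c.IsOpenAt f b → c.le f a → ∀ e, π f ∈ e → t a e = t b e)
    {g : W} (hg : c.depth g = N + 1) :
    ∃ Y r' t', c.IsPositionAt G U π g Y r' t' ∧
      ∀ a, c.le a g → a ≠ g → ∀ f, c.IsOpenAt f g → c.le f a → ∀ e, π f ∈ e → t a e = t' e := by
  have hgq : N + 1 ≤ q := hg ▸ c.heightLE g
  -- the position before the move to `g`: the parent's, or the initial one if `g` is a root
  obtain ⟨X₀, r₀, t₀, hs₀, hX₀, hagree₀⟩ : ∃ X₀ r₀ t₀,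
      RobberState G k U (q - c.depth g + 1) X₀ r₀ t₀ ∧
      (∀ f, c.IsOpenAt f g → f ≠ g → Sum.inl (π f) ∈ X₀) ∧
      ∀ a, c.le a g → a ≠ g → ∀ f, c.IsOpenAt f g → c.le f a → ∀ e, π f ∈ e → t a e = t₀ e := by
    by_cases hroot : ∀ a, c.le a g → a = g
    · obtain ⟨r₀, t₀, hs₀⟩ := hinit
      have hq : q - c.depth g + 1 = q := by rw [c.depth_eq_one hroot]; omega
      exact ⟨initPos V k, r₀, t₀, by rwa [hq], fun f hf hne => absurd (hroot f hf.1) hne,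
        fun a hag hane => absurd (hroot a hag) hane⟩
    · push Not at hroot
      obtain ⟨p, hpg, hpne, hbelow, hdepth⟩ := c.exists_parent hroot
      obtain ⟨hs, -, hXp⟩ := hpos p (by omega)
      have hq : q - c.depth p = q - c.depth g + 1 := by omega
      refine ⟨X p, r p, t p, by rwa [← hq],
        fun f hf hne => hXp f (hf.of_le (hbelow f hf.1 hne) hpg),
        fun a hag hane f hf hfa => hagree a p (hbelow a hag hane) (by omega) f ?_ hfa⟩
      exact hf.of_le (c.le_trans f a p hfa (hbelow a hag hane)) hpg
  obtain ⟨Y, r', t', hpos', hagree'⟩ := c.exists_isPositionAt π g hs₀ hX₀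
  refine ⟨Y, r', t', hpos', fun a hag hane f hf hfa e he =>
    (hagree₀ a hag hane f hf hfa e he).trans (hagree' f hf ?_ e he).symm⟩
  rintro rfl
  exact hane (c.le_antisymm a f hag hfa)

lemma exists_isPositionAt_of_depth_le (hinit : ∃ r t, RobberState G k U q (initPos V k) r t)
    (N : ℕ) : ∃ (X : W → Finset (V ⊕ Fin k)) (r : W → V) (t : W → Sym2 V → ZMod 2),
      (∀ a, c.depth a ≤ N → c.IsPositionAt G U π a (X a) (r a) (t a)) ∧
      ∀ a b, c.le a b → c.depth b ≤ N →
        ∀ f, c.IsOpenAt f b → c.le f a → ∀ e, π f ∈ e → t a e = t b e := by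
  induction N with
  | zero =>
    refine ⟨fun _ => ∅, π, fun _ => 0, fun a ha => ?_, fun _ b _ hb => ?_⟩
    · exact absurd ha (c.depth_pos a).not_ge
    · exact absurd hb (c.depth_pos b).not_ge
  | succ N ih =>
    obtain ⟨X, r, t, hpos, hagree⟩ := ih
    have hnext : ∀ g, ∃ Y r' t', c.depth g = N + 1 → c.IsPositionAt G U π g Y r' t' ∧
        ∀ a, c.le a g → a ≠ g → ∀ f, c.IsOpenAt f g → c.le f a → ∀ e, π f ∈ e → t a e = t' e := by
      intro g
      by_cases hg : c.depth g = N + 1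
      · obtain ⟨Y, r', t', h⟩ := c.exists_isPositionAt_of_depth_eq_succ hinit hpos hagree hg
        exact ⟨Y, r', t', fun _ => h⟩
      · exact ⟨X g, r g, t g, fun h => absurd h hg⟩
    choose Y r' t' hnext using hnext
    classical
    refine ⟨fun a => if c.depth a ≤ N then X a else Y a,
      fun a => if c.depth a ≤ N then r a else r' a,
      fun a => if c.depth a ≤ N then t a else t' a, fun a ha => ?_, fun a b hab hb => ?_⟩
    · by_cases haN : c.depth a ≤ N
      · simpa only [if_pos haN] using hpos a haN
      · simpa only [if_neg haN] using (hnext a (by omega)).1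
    · by_cases hbN : c.depth b ≤ N
      · have haN := (c.depth_le_depth hab).trans hbN
        simpa only [if_pos haN, if_pos hbN] using hagree a b hab hbN
      rcases eq_or_ne a b with rfl | hne
      · exact fun _ _ _ _ _ => rfl
      have haN : c.depth a ≤ N := by have := c.depth_lt_depth hab hne; omega
      simpa only [if_pos haN, if_neg hbN] using (hnext b (by omega)).2 a hab hne

end

lemma exists_twist {V : Type*} [Fintype V] [DecidableEq V]
    {G : SimpleGraph V} [DecidableRel G.Adj] {U : Set V} {W : Type*} [Fintype W]
    {F : SimpleGraph W} {k q : ℕ} (c : PebbleForestCover F k q)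
    (hinit : ∃ r t, RobberState G k U q (initPos V k) r t) (π : W → V) :
    ∃ t : W → Sym2 V → ZMod 2, (∀ a, G.boundary (t a) (π a) = U.indicator 1 (π a)) ∧
      ∀ u w, F.Adj u w → t u s(π u, π w) = t w s(π u, π w) := by
  obtain ⟨X, r, t, hpos, hagree⟩ := c.exists_isPositionAt_of_depth_le (π := π) hinit q
  have hopen : ∀ {u w}, F.Adj u w → c.le u w → c.IsOpenAt u w :=
    fun huw hle => ⟨hle, _, huw, c.le_refl _⟩
  refine ⟨t, fun a => ?_, fun u w huw => ?_⟩
  · obtain ⟨⟨-, hr, -, ht⟩, hπ, -⟩ := hpos a (c.heightLE a)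
    have hne : π a ≠ r a := fun h => hr (h ▸ hπ)
    rw [ht, Pi.add_apply, Pi.single_eq_of_ne hne, add_zero]
  · rcases c.cover huw with hle | hle
    · exact hagree u w hle (c.heightLE w) u (hopen huw hle) (c.le_refl u) _ (Sym2.mem_mk_left _ _)
    · exact (hagree w u hle (c.heightLE u) w (hopen huw.symm hle) (c.le_refl w) _
        (Sym2.mem_mk_right _ _)).symm

end PebbleForestCover

theorem closedness_td_core_general (k : ℕ) (q : ℕ) {n : ℕ} (G : SimpleGraph (Fin n))
    (hconn : G.Connected) (hrob : RobberWinsGame G k q) :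
    ∀ U : Set (Fin n), Odd U.ncard → HomIndist (Tclass k q) (CFI G ∅) (CFI G U) := by
  classical
  intro U hU A ⟨c⟩
  have hinit := exists_robberState_initPos hconn hU hrob
  choose T hT hagree using c.exists_twist hinit
  refine homCount_CFI_eq_of_twist A.2 ∅ U T (fun π w => ?_) hagree
  rw [hT, Set.indicator_empty, zero_add]

/-- If Robber wins the non-monotone `q`-round `k`-cops-and-robber game on a connected
graph `G`, then `G_0` and `G_1` are homomorphism indistinguishable over `T^k_q`. -/
theorem closedness_td_core (k : ℕ) (hk : 1 ≤ k) (q : ℕ) {n : ℕ} (G : SimpleGraph (Fin n))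
    (hconn : G.Connected) (hrob : RobberWinsGame G k q) :
    ∀ U : Set (Fin n), Odd U.ncard → HomIndist (Tclass k q) (CFI G ∅) (CFI G U) :=
  closedness_td_core_general k q G hconn hrob
end
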